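/- arXiv:2411.15884 — 3 statements merged into one kernel-verified Lean document; each statement's English description precedes it below -/
import Mathlib

section
/- Let (G,+) be a finite additive group with |G| = n. There exists a (k,ℓ)-near-factorization of G if and only if there exists an (n,2;k,ℓ;1,1)-GSEDF in G. More precisely: if (A,B) is a (k,ℓ)-near-factorization of G, then the two sets −A and B form an (n,2;k,ℓ;1,1)-GSEDF in G; and conversely, if A₁ and A₂ form an (n,2;k,ℓ;1,1)-GSEDF in G, then (−A₁, A₂) is a (k,ℓ)-near-factorization of G. -/
open Pointwise

/-- `(A,B)` is a `(k,ℓ)`-near-factorization of the finite additive group `G`. -/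
def IsAddNearFactorization {G : Type*} [AddGroup G] [Fintype G] [DecidableEq G]
    (A B : Finset G) (k ℓ : ℕ) : Prop :=
  A.card = k ∧ B.card = ℓ ∧ A.card * B.card = Fintype.card G - 1 ∧
    A + B = Finset.univ \ {0}

/-- The multiset of external differences `D(X,Y) = {x - y : x ∈ X, y ∈ Y}`
(with multiplicity). -/
def extDiff {G : Type*} [AddGroup G] [DecidableEq G] (X Y : Finset G) : Multiset G :=
  (X ×ˢ Y).val.map (fun p => p.1 - p.2)

/-- Two disjoint subsets `A₁, A₂` of `G` with `|A₁| = k`, `|A₂| = ℓ` form an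
`(n,2;k,ℓ;1,1)`-GSEDF: each of the multisets `D(A₁,A₂)` and `D(A₂,A₁)` covers
every nonzero element of `G` exactly once. -/
def IsGSEDF2 {G : Type*} [AddGroup G] [Fintype G] [DecidableEq G]
    (A₁ A₂ : Finset G) (k ℓ : ℕ) : Prop :=
  Disjoint A₁ A₂ ∧ A₁.card = k ∧ A₂.card = ℓ ∧
    extDiff A₁ A₂ = (Finset.univ \ ({0} : Finset G)).val ∧
    extDiff A₂ A₁ = (Finset.univ \ ({0} : Finset G)).val



set_option linter.unusedSectionVars false
set_option maxHeartbeats 1000000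
open Finset

namespace NFaux
variable {G : Type*} [AddGroup G] [Fintype G] [DecidableEq G]


noncomputable abbrev sg (g : G) : AddMonoidAlgebra ℚ G := AddMonoidAlgebra.single g 1

/-- sum of a multiset as group-algebra element -/
noncomputable def msum (m : Multiset G) : AddMonoidAlgebra ℚ G := (m.map sg).sum

lemma msum_apply (m : Multiset G) (g : G) : (msum m).coeff g = (m.count g : ℚ) := by
  induction m using Multiset.induction with
  | empty => simp [msum]
  | cons a s ih =>
    simp only [msum, Multiset.map_cons, Multiset.sum_cons, Multiset.count_cons]
    rw [AddMonoidAlgebra.coeff_add, Finsupp.add_apply]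
    simp only [msum] at ih
    rw [ih]
    by_cases h : g = a
    · subst h; simp [sg, AddMonoidAlgebra.coeff_single, Finsupp.single_apply, add_comm]
    · simp [sg, AddMonoidAlgebra.coeff_single, Finsupp.single_apply, Ne.symm h, h]

lemma msum_inj {m m' : Multiset G} (h : msum m = msum m') : m = m' := by
  ext g
  have : (msum m).coeff g = (msum m').coeff g := by rw [h]
  rw [msum_apply, msum_apply] at this
  exact_mod_cast this

noncomputable def ind (S : Finset G) : AddMonoidAlgebra ℚ G := ∑ s ∈ S, sg s

lemma msum_val (S : Finset G) : msum S.val = ind S := rfl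

def pmul (A B : Finset G) : Multiset G := (A ×ˢ B).val.map (fun p => p.1 + p.2)

lemma ind_mul_ind (A B : Finset G) : ind A * ind B = msum (pmul A B) := by
  rw [ind, ind, Finset.sum_mul_sum]
  have : msum (pmul A B) = ∑ p ∈ A ×ˢ B, sg (p.1 + p.2) := by
    rw [msum, pmul, Multiset.map_map, Finset.sum]
    rfl
  rw [this, Finset.sum_product]
  refine Finset.sum_congr rfl fun a _ => Finset.sum_congr rfl fun b _ => ?_
  simp [sg, AddMonoidAlgebra.single_mul_single]

lemma pmul_card (A B : Finset G) : Multiset.card (pmul A B) = A.card * B.card := by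
  simp [pmul, Finset.card_product]

lemma mem_pmul {A B : Finset G} {x : G} : x ∈ pmul A B ↔ ∃ a ∈ A, ∃ b ∈ B, a + b = x := by
  simp only [pmul, Multiset.mem_map, Finset.mem_val, Finset.mem_product]
  constructor
  · rintro ⟨⟨a, b⟩, ⟨ha, hb⟩, rfl⟩; exact ⟨a, ha, b, hb, rfl⟩
  · rintro ⟨a, ha, b, hb, rfl⟩; exact ⟨⟨a, b⟩, ⟨ha, hb⟩, rfl⟩

lemma nonzeros_card : (univ \ {0} : Finset G).card = Fintype.card G - 1 := by
  rw [Finset.card_sdiff_of_subset (by simp), Finset.card_singleton, Finset.card_univ]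

lemma nonzeros_image_neg : ((univ \ {0} : Finset G)).image (fun x => -x) = univ \ {0} := by
  ext x
  simp only [Finset.mem_image, Finset.mem_sdiff, Finset.mem_univ, Finset.mem_singleton, true_and]
  constructor
  · rintro ⟨y, hy, rfl⟩; simpa using hy
  · intro hx; exact ⟨-x, by simpa using hx, by simp⟩

lemma nonzeros_val_map_neg :
    ((univ \ {0} : Finset G)).val.map (fun x => -x) = (univ \ {0} : Finset G).val := by
  rw [← Finset.image_val_of_injOn (neg_injective.injOn), nonzeros_image_neg]

lemma neg_prod_eq (X Y : Finset G) :
    (-X) ×ˢ (-Y) = (Y ×ˢ X).image (fun p => (-p.2, -p.1)) := by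
  ext ⟨u, v⟩
  simp only [Finset.mem_product, Finset.mem_image, Finset.mem_neg', Prod.mk.injEq, Prod.exists]
  constructor
  · rintro ⟨hu, hv⟩; exact ⟨-v, -u, ⟨by simpa using hv, by simpa using hu⟩, by simp, by simp⟩
  · rintro ⟨a, b, ⟨ha, hb⟩, rfl, rfl⟩; simp [ha, hb]

lemma pmul_neg_neg (X Y : Finset G) :
    pmul (-X) (-Y) = (pmul Y X).map (fun x => -x) := by
  have hinj : Function.Injective (fun p : G × G => (-p.2, -p.1)) := by
    intro p q hpq
    have h1 := congrArg Prod.fst hpq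
    have h2 := congrArg Prod.snd hpq
    simp only at h1 h2
    ext
    · exact neg_injective h2
    · exact neg_injective h1
  rw [pmul, neg_prod_eq, Finset.image_val_of_injOn hinj.injOn, Multiset.map_map, pmul,
    Multiset.map_map]
  apply Multiset.map_congr rfl
  intro p _
  simp [neg_add_rev]

lemma prod_neg_right (X Y : Finset G) :
    X ×ˢ (-Y) = (X ×ˢ Y).image (fun p => (p.1, -p.2)) := by
  ext ⟨u, v⟩
  simp only [Finset.mem_product, Finset.mem_image, Finset.mem_neg', Prod.mk.injEq, Prod.exists]
  constructor
  · rintro ⟨hu, hv⟩; exact ⟨u, -v, ⟨hu, by simpa using hv⟩, rfl, by simp⟩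
  · rintro ⟨a, b, ⟨ha, hb⟩, rfl, rfl⟩; simp [ha, hb]

lemma extDiff_eq_pmul (X Y : Finset G) :
    (X ×ˢ Y).val.map (fun p => p.1 - p.2) = pmul X (-Y) := by
  have hinj : Function.Injective (fun p : G × G => (p.1, -p.2)) := by
    intro p q hpq
    have h1 := congrArg Prod.fst hpq
    have h2 := congrArg Prod.snd hpq
    simp only at h1 h2
    ext
    · exact h1
    · exact neg_injective h2
  rw [pmul, prod_neg_right, Finset.image_val_of_injOn hinj.injOn, Multiset.map_map]
  symm
  apply Multiset.map_congr rfl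
  intro p _
  simp [sub_eq_add_neg]

lemma neg_neg_finset (A : Finset G) : -(-A) = A := by
  ext x; simp

lemma sigma_mul_sg (g : G) : ind (univ : Finset G) * sg g = ind univ := by
  rw [ind, Finset.sum_mul]
  have : ∀ s : G, sg s * sg g = sg (s + g) := fun s => by
    simp [sg, AddMonoidAlgebra.single_mul_single]
  simp_rw [this]
  exact Fintype.sum_equiv (Equiv.addRight g) _ _ (fun s => rfl)

lemma sg_mul_sigma (g : G) : sg g * ind (univ : Finset G) = ind univ := by
  rw [ind, Finset.mul_sum]
  have : ∀ s : G, sg g * sg s = sg (g + s) := fun s => by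
    simp [sg, AddMonoidAlgebra.single_mul_single]
  simp_rw [this]
  exact Fintype.sum_equiv (Equiv.addLeft g) _ _ (fun s => rfl)

lemma ind_mul_sigma (S : Finset G) : ind S * ind (univ : Finset G) = S.card • ind univ := by
  rw [ind, Finset.sum_mul]
  simp_rw [fun s => sg_mul_sigma (G := G) s]
  rw [Finset.sum_const]

lemma sigma_mul_ind (S : Finset G) : ind (univ : Finset G) * ind S = S.card • ind univ := by
  have h : ind (univ : Finset G) * ind S = ∑ s ∈ S, ind (univ : Finset G) * sg s :=
    Finset.mul_sum _ _ _
  rw [h]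
  simp_rw [fun s => sigma_mul_sg (G := G) s]
  rw [Finset.sum_const]

lemma ind_nonzeros : ind (univ \ {0} : Finset G) = ind univ - 1 := by
  have h := Finset.sum_sdiff (f := sg) (Finset.subset_univ ({0} : Finset G))
  rw [Finset.sum_singleton] at h
  have h1 : (1 : AddMonoidAlgebra ℚ G) = sg 0 := rfl
  rw [ind, ind, h1, eq_sub_iff_add_eq]
  exact h

noncomputable def bb : Module.Basis G ℚ (AddMonoidAlgebra ℚ G) :=
  Finsupp.basisSingleOne.map (AddMonoidAlgebra.coeffLinearEquiv ℚ).symm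

/-- An idempotent in the group algebra whose coefficient at `0` vanishes is zero. -/
lemma idem_zero (X : AddMonoidAlgebra ℚ G) (hX : X * X = X) (h0 : X.coeff 0 = 0) : X = 0 := by
  set T := LinearMap.mulLeft ℚ X with hT
  have hTT : T ∘ₗ T = T := by rw [hT, ← LinearMap.mulLeft_mul, hX]
  haveI : Module.Finite ℚ (AddMonoidAlgebra ℚ G) := Module.Finite.of_basis (bb (G := G))
  obtain ⟨p, hp⟩ := (LinearMap.isProj_iff_isIdempotentElem T).mpr hTT
  have htr : LinearMap.trace ℚ _ T = 0 := by
    rw [LinearMap.trace_eq_matrix_trace ℚ (bb (G := G)) T]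
    rw [Matrix.trace]
    have : ∀ g : G, (LinearMap.toMatrix bb bb T).diag g = 0 := by
      intro g
      rw [Matrix.diag_apply, LinearMap.toMatrix_apply]
      have h1 : T (bb g) = X * sg g := by
        have : bb g = sg g := by simp [bb, Finsupp.basisSingleOne]
        rw [this, hT]; rfl
      rw [h1]
      have h2 : (bb (G := G)).repr (X * sg g) g = (X * sg g).coeff g := rfl
      rw [h2]
      have := AddMonoidAlgebra.coeff_mul_single_apply (R := ℚ) X 1 g g
      rw [this, add_neg_cancel, h0, zero_mul]
    exact Finset.sum_eq_zero fun g _ => this g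
  have hfr : LinearMap.trace ℚ _ T = (Module.finrank ℚ p : ℚ) := hp.trace
  have : (Module.finrank ℚ p : ℚ) = 0 := by rw [← hfr, htr]
  have hp0 : Module.finrank ℚ p = 0 := by exact_mod_cast this
  have hbot : p = ⊥ := Submodule.finrank_eq_zero.mp hp0
  have hT0 : ∀ v, T v = 0 := by
    intro v
    have := hp.map_mem v
    rw [hbot, Submodule.mem_bot] at this
    exact this
  have := hT0 1
  rw [hT] at this
  simpa using this

lemma ring_iff (C D : Finset G) :
    ind C * ind D = ind (univ : Finset G) - 1 ↔ pmul C D = (univ \ {0} : Finset G).val := by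
  rw [ind_mul_ind, ← ind_nonzeros, ← msum_val]
  constructor
  · exact msum_inj
  · intro h; rw [h]

/-- De Caen–Gregory–Hughes–Kreher: the product can be reversed. -/
lemma swap_core (A B : Finset G) (h : ind A * ind B = ind (univ : Finset G) - 1) :
    ind B * ind A = ind (univ : Finset G) - 1 := by
  set σ := ind (univ : Finset G) with hσ
  set n := Fintype.card G with hn
  have hm : pmul A B = (univ \ {0} : Finset G).val := (ring_iff A B).mp h
  have hc : A.card * B.card = n - 1 := by
    have := congrArg Multiset.card hm
    rw [pmul_card] at this
    rw [this]
    exact nonzeros_card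
  have hn1 : 1 ≤ n := Fintype.card_pos
  set Y := ind B * ind A with hY
  -- zero not in B + A
  have h0AB : (0 : G) ∉ pmul A B := by
    rw [hm, Finset.mem_val]
    simp
  have h0BA : (0 : G) ∉ pmul B A := by
    intro hmem
    obtain ⟨b, hb, a, ha, hba⟩ := mem_pmul.mp hmem
    apply h0AB
    rw [mem_pmul]
    exact ⟨a, ha, b, hb, by rw [eq_neg_of_add_eq_zero_right hba]; simp⟩
  have hY0 : Y.coeff 0 = 0 := by
    rw [hY, ind_mul_ind, msum_apply]
    rw [Multiset.count_eq_zero_of_notMem h0BA]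
    simp
  -- σ identities
  have hYσ : Y * σ = (B.card * A.card) • σ := by
    rw [hY, mul_assoc, ind_mul_sigma, ← hσ, mul_smul_comm, ind_mul_sigma, ← hσ, smul_smul,
      Nat.mul_comm]
  have hσY : σ * Y = (B.card * A.card) • σ := by
    rw [hY, ← mul_assoc, hσ, sigma_mul_ind, ← hσ, smul_mul_assoc, hσ, sigma_mul_ind, ← hσ,
      smul_smul]
  have hσσ : σ * σ = n • σ := by
    rw [hσ, ind_mul_sigma, Finset.card_univ, ← hσ, ← hn]
  have hYY : Y * Y = (B.card * A.card) • σ - Y := by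
    have e : Y * Y = ind B * ((ind A * ind B) * ind A) := by
      rw [hY, mul_assoc, ← mul_assoc (ind A)]
    rw [e, h, sub_mul, one_mul, mul_sub, hσ, sigma_mul_ind, ← hσ, mul_smul_comm, hY,
      hσ, ind_mul_sigma, ← hσ, smul_smul, Nat.mul_comm A.card]
  set X := Y - σ + 1 with hXdef
  have hnσ : (n : ℕ) • σ = (B.card * A.card) • σ + σ := by
    rw [Nat.mul_comm, hc, ← Nat.sub_add_cancel hn1]
    rw [add_nsmul, one_nsmul, Nat.sub_add_cancel hn1]
  have hXX : X * X = X := by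
    have e1 : X * X = (Y * Y - Y * σ + Y) - (σ * Y - σ * σ + σ) + (Y - σ + 1) := by
      rw [hXdef]
      simp only [sub_mul, mul_sub, add_mul, mul_add, mul_one, one_mul]
      abel
    rw [e1, hYY, hYσ, hσY, hσσ, hnσ, hXdef]
    abel
  have hX0 : X.coeff 0 = 0 := by
    rw [hXdef]
    rw [AddMonoidAlgebra.coeff_add, AddMonoidAlgebra.coeff_sub, Finsupp.add_apply, Finsupp.sub_apply]
    have hσ0 : σ.coeff 0 = 1 := by
      rw [hσ, ← msum_val, msum_apply,
        Multiset.count_eq_one_of_mem (univ : Finset G).nodup (Finset.mem_univ 0)]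
      norm_num
    have h10 : (1 : AddMonoidAlgebra ℚ G).coeff 0 = 1 := Finsupp.single_eq_same
    rw [hY0, hσ0, h10]
    ring
  have hXz : X = 0 := idem_zero X hXX hX0
  have : Y = σ - 1 := by
    rw [← sub_eq_zero]
    calc Y - (σ - 1) = Y - σ + 1 := by abel
    _ = X := hXdef.symm
    _ = 0 := hXz
  exact this

lemma extDiff_pmul (X Y : Finset G) :
    extDiff X Y = (univ \ {0} : Finset G).val ↔
      ind X * ind (-Y) = ind (univ : Finset G) - 1 := by
  rw [extDiff, extDiff_eq_pmul, ring_iff]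

/-- anti-automorphism step : reverse and negate. -/
lemma neg_flip (C D : Finset G) (h : ind C * ind D = ind (univ : Finset G) - 1) :
    ind (-D) * ind (-C) = ind (univ : Finset G) - 1 := by
  have hm : pmul C D = (univ \ {0} : Finset G).val := (ring_iff C D).mp h
  rw [ring_iff, pmul_neg_neg, hm, nonzeros_val_map_neg]

lemma toGSEDF {k l : ℕ} (A B : Finset G) (h : IsAddNearFactorization A B k l) :
    IsGSEDF2 (-A) B k l := by
  obtain ⟨hA, hB, hc, hset⟩ := h
  have hm : pmul A B = (univ \ {0} : Finset G).val := by
    have hle : (univ \ {0} : Finset G).val ≤ pmul A B := by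
      rw [Multiset.le_iff_subset (univ \ {0} : Finset G).nodup]
      intro x hx
      rw [Finset.mem_val, ← hset] at hx
      obtain ⟨a, ha, b, hb, hab⟩ := Finset.mem_add.mp hx
      exact mem_pmul.mpr ⟨a, ha, b, hb, hab⟩
    refine (Multiset.eq_of_le_of_card_le hle ?_).symm
    have hc1 : Multiset.card (pmul A B) = Fintype.card G - 1 := by rw [pmul_card, hc]
    have hc2 : Multiset.card (univ \ {0} : Finset G).val = Fintype.card G - 1 := nonzeros_card
    rw [hc1, hc2]
  have hring : ind A * ind B = ind (univ : Finset G) - 1 := (ring_iff A B).mpr hm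
  have hswap : ind B * ind A = ind (univ : Finset G) - 1 := swap_core A B hring
  have hflip : ind (-A) * ind (-B) = ind (univ : Finset G) - 1 := neg_flip B A hswap
  refine ⟨?_, ?_, hB, ?_, ?_⟩
  · rw [Finset.disjoint_left]
    intro x hxA hxB
    have hA' : -x ∈ A := Finset.mem_neg'.mp hxA
    have : (-x) + x ∈ A + B := Finset.add_mem_add hA' hxB
    rw [neg_add_cancel, hset] at this
    simp at this
  · rw [Finset.card_neg]; exact hA
  · exact (extDiff_pmul (-A) B).mpr hflip
  · refine (extDiff_pmul B (-A)).mpr ?_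
    rw [neg_neg_finset]
    exact hswap

lemma toNF {k l : ℕ} (A₁ A₂ : Finset G) (h : IsGSEDF2 A₁ A₂ k l) :
    IsAddNearFactorization (-A₁) A₂ k l := by
  obtain ⟨hdis, h1, h2, h12, h21⟩ := h
  have hring : ind A₂ * ind (-A₁) = ind (univ : Finset G) - 1 := (extDiff_pmul A₂ A₁).mp h21
  have hswap : ind (-A₁) * ind A₂ = ind (univ : Finset G) - 1 := swap_core A₂ (-A₁) hring
  have hm : pmul (-A₁) A₂ = (univ \ {0} : Finset G).val := (ring_iff _ _).mp hswap
  refine ⟨by rw [Finset.card_neg]; exact h1, h2, ?_, ?_⟩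
  · have := congrArg Multiset.card hm
    rw [pmul_card] at this
    rw [this]
    exact nonzeros_card
  · ext x
    rw [Finset.mem_add, ← Finset.mem_val, ← hm, mem_pmul]

end NFaux


/-- There exists a `(k,ℓ)`-near-factorization of `G` iff there exists an
`(n,2;k,ℓ;1,1)`-GSEDF in `G`; more precisely, if `(A,B)` is a `(k,ℓ)`-near-factorization
then `(-A, B)` is a GSEDF, and if `(A₁,A₂)` is a GSEDF then `(-A₁, A₂)` is a
`(k,ℓ)`-near-factorization. -/
theorem stmt3 {G : Type*} [AddGroup G] [Fintype G] [DecidableEq G] (k ℓ : ℕ) :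
    ((∃ A B : Finset G, IsAddNearFactorization A B k ℓ) ↔
      (∃ A₁ A₂ : Finset G, IsGSEDF2 A₁ A₂ k ℓ)) ∧
    (∀ A B : Finset G, IsAddNearFactorization A B k ℓ → IsGSEDF2 (-A) B k ℓ) ∧
    (∀ A₁ A₂ : Finset G, IsGSEDF2 A₁ A₂ k ℓ → IsAddNearFactorization (-A₁) A₂ k ℓ) := by
  refine ⟨⟨?_, ?_⟩, fun A B h => NFaux.toGSEDF A B h, fun A₁ A₂ h => NFaux.toNF A₁ A₂ h⟩
  · rintro ⟨A, B, h⟩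
    exact ⟨-A, B, NFaux.toGSEDF A B h⟩
  · rintro ⟨A₁, A₂, h⟩
    exact ⟨-A₁, A₂, NFaux.toNF A₁ A₂ h⟩
end

section
/- Suppose (A',B') is a strongly symmetric near-factorization of the dihedral group D_n with |A'| = k and |B'| = ℓ. Suppose further that the equivalent near-factorization (C',D') given by C' = f_{i,j}(A')h and D' = h⁻¹ f_{i,j}(B') is also strongly symmetric, and that gcd(n, (k+1)/2) = gcd(n, (ℓ+1)/2) = 1. Then n, k and ℓ are all odd, h ∈ {e, a}, and j = 0. -/
open Pointwise

/-- A subset `X` of `D_n` is strongly symmetric if `a^i b^j ∈ X ↔ a^i b^{-j} ∈ X`. -/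
def StronglySymmetric {n : ℕ} (X : Finset (DihedralGroup n)) : Prop :=
  ∀ j : ZMod n, (DihedralGroup.r j ∈ X ↔ DihedralGroup.r (-j) ∈ X) ∧
    (DihedralGroup.sr j ∈ X ↔ DihedralGroup.sr (-j) ∈ X)

/-- The automorphism `f_{i,j}` of `D_n`, acting by `b^h ↦ b^{i·h}` and
`a·b^h ↦ a·b^{j + i·h}`. -/
def fij (n : ℕ) (i j : ℕ) : DihedralGroup n → DihedralGroup n
  | DihedralGroup.r h => DihedralGroup.r ((i : ZMod n) * h)
  | DihedralGroup.sr h => DihedralGroup.sr ((j : ZMod n) + (i : ZMod n) * h)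

namespace NFAux

lemma fij_r (n i j : ℕ) (x : ZMod n) :
    fij n i j (DihedralGroup.r x) = DihedralGroup.r ((i : ZMod n) * x) := rfl

lemma fij_sr (n i j : ℕ) (x : ZMod n) :
    fij n i j (DihedralGroup.sr x) = DihedralGroup.sr ((j : ZMod n) + (i : ZMod n) * x) := rfl

lemma inv_r {n : ℕ} (t : ZMod n) : (DihedralGroup.r t)⁻¹ = DihedralGroup.r (-t) := rfl

lemma inv_sr {n : ℕ} (t : ZMod n) : (DihedralGroup.sr t)⁻¹ = DihedralGroup.sr t := rfl

/-- A finset of `ZMod n` closed under translation by `d` satisfies `|S| * d = 0`. -/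
lemma closure_mul_eq_zero {n : ℕ} [NeZero n] (S : Finset (ZMod n)) (d : ZMod n)
    (h : ∀ x ∈ S, x + d ∈ S) : (S.card : ZMod n) * d = 0 := by
  have himg : S.image (· + d) = S := by
    apply Finset.eq_of_subset_of_card_le
    · intro y hy
      obtain ⟨x, hx, rfl⟩ := Finset.mem_image.mp hy
      exact h x hx
    · rw [Finset.card_image_of_injective _ (add_left_injective d)]
  have hsum : ∑ x ∈ S, (x + d) = ∑ x ∈ S, x := by
    conv_rhs => rw [← himg]
    rw [Finset.sum_image (fun x _ y _ hxy => by simpa using hxy)]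
  rw [Finset.sum_add_distrib, Finset.sum_const, add_eq_left] at hsum
  rw [← nsmul_eq_mul]
  exact hsum

lemma sym_refl {n : ℕ} [NeZero n] (S : Finset (ZMod n)) (τ : ZMod n)
    (hsym : ∀ x ∈ S, -x ∈ S) (hrefl : ∀ x ∈ S, τ - x ∈ S) :
    (S.card : ZMod n) * τ = 0 :=
  closure_mul_eq_zero S τ (fun x hx => by
    have := hrefl _ (hsym x hx); rwa [sub_neg_eq_add, add_comm] at this)

lemma cancel {n : ℕ} [NeZero n] {m : ℕ} (hm : Nat.Coprime m n) {x : ZMod n}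
    (hx : (m : ZMod n) * x = 0) : x = 0 :=
  ((ZMod.isUnit_iff_coprime m n).mpr hm).mul_right_eq_zero.mp hx

lemma cancel2 {n : ℕ} [NeZero n] (hodd : Odd n) {m : ℕ} (hm : Nat.Coprime m n) {x : ZMod n}
    (hx : (m : ZMod n) * (x + x) = 0) : x = 0 := by
  have h2 : ((2 : ℕ) : ZMod n) * ((m : ZMod n) * x) = 0 := by
    push_cast
    linear_combination hx
  exact cancel hm (cancel hodd.coprime_two_left h2)

/-- The key symmetry lemma: if `S` is symmetric and the set `{α + y : y ∈ S}` (described by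
the predicate `P`) is closed under negation, then `|S| * 2α = 0`. -/
lemma key {n : ℕ} [NeZero n] (S : Finset (ZMod n)) (hsym : ∀ y ∈ S, -y ∈ S)
    (P : ZMod n → Prop) (α : ZMod n)
    (hmem : ∀ z, P z ↔ ∃ y ∈ S, α + y = z)
    (hP : ∀ z, P z → P (-z)) :
    (S.card : ZMod n) * (α + α) = 0 := by
  have hrefl : ∀ y ∈ S, (-(α + α)) - y ∈ S := by
    intro y hy
    obtain ⟨y', hy', he⟩ := (hmem _).mp (hP _ ((hmem _).mpr ⟨y, hy, rfl⟩))
    have hyy : y' = (-(α + α)) - y := by linear_combination he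
    exact hyy ▸ hy'
  have := sym_refl S _ hsym hrefl
  rwa [mul_neg, neg_eq_zero] at this

private def isRot {n : ℕ} : DihedralGroup n → Bool
  | .r _ => true
  | .sr _ => false

@[simp] private lemma isRot_r {n : ℕ} (x : ZMod n) : isRot (DihedralGroup.r x) = true := rfl
@[simp] private lemma isRot_sr {n : ℕ} (x : ZMod n) : isRot (DihedralGroup.sr x) = false := rfl

private lemma isRot_mul {n : ℕ} (x y : DihedralGroup n) :
    isRot (x * y) = true ↔
      ((isRot x = true ∧ isRot y = true) ∨ (isRot x = false ∧ isRot y = false)) := by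
  cases x <;> cases y <;>
    simp [DihedralGroup.r_mul_r, DihedralGroup.r_mul_sr, DihedralGroup.sr_mul_r,
      DihedralGroup.sr_mul_sr]

private lemma isRot_mul' {n : ℕ} (x y : DihedralGroup n) :
    isRot (x * y) = false ↔
      ((isRot x = true ∧ isRot y = false) ∨ (isRot x = false ∧ isRot y = true)) := by
  cases x <;> cases y <;>
    simp [DihedralGroup.r_mul_r, DihedralGroup.r_mul_sr, DihedralGroup.sr_mul_r,
      DihedralGroup.sr_mul_sr]

private lemma r_inj {n : ℕ} : Function.Injective (DihedralGroup.r (n := n)) :=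
  fun a b hab => by injection hab

private lemma sr_inj {n : ℕ} : Function.Injective (DihedralGroup.sr (n := n)) :=
  fun a b hab => by injection hab

private lemma filter_rot_eq {n : ℕ} [NeZero n] (X : Finset (DihedralGroup n)) :
    X.filter (fun g => isRot g = true)
      = (Finset.univ.filter fun x : ZMod n => DihedralGroup.r x ∈ X).image DihedralGroup.r := by
  ext g
  cases g <;> simp [Finset.mem_filter, Finset.mem_image]

private lemma filter_sr_eq {n : ℕ} [NeZero n] (X : Finset (DihedralGroup n)) :
    X.filter (fun g => isRot g = false)
      = (Finset.univ.filter fun x : ZMod n => DihedralGroup.sr x ∈ X).image DihedralGroup.sr := by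
  ext g
  cases g <;> simp [Finset.mem_filter, Finset.mem_image]

lemma card_split {n : ℕ} [NeZero n] (X : Finset (DihedralGroup n)) :
    X.card = (Finset.univ.filter fun x : ZMod n => DihedralGroup.r x ∈ X).card
      + (Finset.univ.filter fun x : ZMod n => DihedralGroup.sr x ∈ X).card := by
  rw [← Finset.card_filter_add_card_filter_not (fun g => isRot g = true)]
  congr 1
  · rw [filter_rot_eq, Finset.card_image_of_injective _ r_inj]
  · have hq : (X.filter fun g => ¬ isRot g = true) = X.filter (fun g => isRot g = false) := by
      apply Finset.filter_congr
      intro g _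
      simp [Bool.not_eq_true]
    rw [hq, filter_sr_eq, Finset.card_image_of_injective _ sr_inj]

lemma counts {n : ℕ} [NeZero n] (A' B' : Finset (DihedralGroup n))
    (h1 : A'.card * B'.card = 2 * n - 1) (h2 : A' * B' = Finset.univ \ {1}) :
    ((Finset.univ.filter fun x : ZMod n => DihedralGroup.r x ∈ A').card *
       (Finset.univ.filter fun x : ZMod n => DihedralGroup.r x ∈ B').card +
     (Finset.univ.filter fun x : ZMod n => DihedralGroup.sr x ∈ A').card *
       (Finset.univ.filter fun x : ZMod n => DihedralGroup.sr x ∈ B').card) + 1 = n ∧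
    ((Finset.univ.filter fun x : ZMod n => DihedralGroup.r x ∈ A').card *
       (Finset.univ.filter fun x : ZMod n => DihedralGroup.sr x ∈ B').card +
     (Finset.univ.filter fun x : ZMod n => DihedralGroup.sr x ∈ A').card *
       (Finset.univ.filter fun x : ZMod n => DihedralGroup.r x ∈ B').card) = n := by
  classical
  have hn1 : 1 ≤ n := Nat.one_le_iff_ne_zero.mpr (NeZero.ne n)
  set f : DihedralGroup n × DihedralGroup n → DihedralGroup n := fun p => p.1 * p.2 with hf
  have himg : (A' ×ˢ B').image f = Finset.univ \ {1} := by
    rw [← h2, Finset.mul_def]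
  have hc2 : (Finset.univ \ {1} : Finset (DihedralGroup n)).card = 2 * n - 1 := by
    rw [Finset.card_sdiff_of_subset (by simp), Finset.card_univ, DihedralGroup.card,
      Finset.card_singleton]
  have hinj : Set.InjOn f (A' ×ˢ B' : Finset (DihedralGroup n × DihedralGroup n)) := by
    apply Finset.card_image_iff.mp
    rw [himg, hc2, Finset.card_product, h1]
  have key : ∀ (Q : DihedralGroup n → Prop) (_ : DecidablePred Q),
      ((A' ×ˢ B').filter fun p => Q (f p)).card
        = ((Finset.univ \ {1}).filter Q).card := by
    intro Q _
    rw [← himg, Finset.filter_image]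
    exact (Finset.card_image_iff.mpr
      (hinj.mono (Finset.coe_subset.mpr (Finset.filter_subset _ _)))).symm
  -- the two right-hand sides
  have hone : (1 : DihedralGroup n) = DihedralGroup.r 0 := DihedralGroup.one_def
  have hRr : ((Finset.univ \ {1} : Finset (DihedralGroup n)).filter
      fun g => isRot g = true).card = n - 1 := by
    rw [Finset.sdiff_singleton_eq_erase, Finset.filter_erase]
    rw [Finset.card_erase_of_mem (by rw [hone]; exact Finset.mem_filter.mpr ⟨Finset.mem_univ _, rfl⟩)]
    have : (Finset.univ.filter fun g : DihedralGroup n => isRot g = true).card = n := by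
      rw [filter_rot_eq, Finset.card_image_of_injective _ r_inj,
        Finset.filter_true_of_mem (fun _ _ => Finset.mem_univ _), Finset.card_univ, ZMod.card]
    rw [this]
  have hRs : ((Finset.univ \ {1} : Finset (DihedralGroup n)).filter
      fun g => isRot g = false).card = n := by
    rw [Finset.sdiff_singleton_eq_erase, Finset.filter_erase,
      Finset.erase_eq_of_notMem (by rw [hone, Finset.mem_filter]; exact fun hm => Bool.noConfusion (hm.2 : true = false))]
    rw [filter_sr_eq, Finset.card_image_of_injective _ sr_inj,
      Finset.filter_true_of_mem (fun _ _ => Finset.mem_univ _), Finset.card_univ, ZMod.card]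
  -- the two left-hand sides
  have hLr : ((A' ×ˢ B').filter fun p => isRot (f p) = true)
      = ((A'.filter fun g => isRot g = true) ×ˢ (B'.filter fun g => isRot g = true)) ∪
        ((A'.filter fun g => isRot g = false) ×ˢ (B'.filter fun g => isRot g = false)) := by
    rw [← Finset.filter_product, ← Finset.filter_product, ← Finset.filter_or]
    exact Finset.filter_congr (fun p _ => isRot_mul p.1 p.2)
  have hLs : ((A' ×ˢ B').filter fun p => isRot (f p) = false)
      = ((A'.filter fun g => isRot g = true) ×ˢ (B'.filter fun g => isRot g = false)) ∪
        ((A'.filter fun g => isRot g = false) ×ˢ (B'.filter fun g => isRot g = true)) := by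
    rw [← Finset.filter_product, ← Finset.filter_product, ← Finset.filter_or]
    exact Finset.filter_congr (fun p _ => isRot_mul' p.1 p.2)
  have hdis1 : Disjoint
      ((A'.filter fun g => isRot g = true) ×ˢ (B'.filter fun g => isRot g = true))
      ((A'.filter fun g => isRot g = false) ×ˢ (B'.filter fun g => isRot g = false)) := by
    rw [Finset.disjoint_left]
    rintro ⟨x, y⟩ hp hq
    simp only [Finset.mem_product, Finset.mem_filter] at hp hq
    simp [hp.1.2] at hq
  have hdis2 : Disjoint
      ((A'.filter fun g => isRot g = true) ×ˢ (B'.filter fun g => isRot g = false))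
      ((A'.filter fun g => isRot g = false) ×ˢ (B'.filter fun g => isRot g = true)) := by
    rw [Finset.disjoint_left]
    rintro ⟨x, y⟩ hp hq
    simp only [Finset.mem_product, Finset.mem_filter] at hp hq
    simp [hp.1.2] at hq
  have hcr := key (fun g => isRot g = true) inferInstance
  have hcs := key (fun g => isRot g = false) inferInstance
  rw [hLr, Finset.card_union_of_disjoint hdis1, Finset.card_product, Finset.card_product,
    hRr, filter_rot_eq A', filter_rot_eq B', filter_sr_eq A', filter_sr_eq B',
    Finset.card_image_of_injective _ r_inj, Finset.card_image_of_injective _ r_inj,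
    Finset.card_image_of_injective _ sr_inj, Finset.card_image_of_injective _ sr_inj] at hcr
  rw [hLs, Finset.card_union_of_disjoint hdis2, Finset.card_product, Finset.card_product,
    hRs, filter_rot_eq A', filter_sr_eq A', filter_rot_eq B', filter_sr_eq B',
    Finset.card_image_of_injective _ r_inj, Finset.card_image_of_injective _ r_inj,
    Finset.card_image_of_injective _ sr_inj, Finset.card_image_of_injective _ sr_inj] at hcs
  omega

end NFAux

/-- If `(A',B')` is a strongly symmetric `(k,ℓ)`-near-factorization of `D_n`, the
equivalent near-factorization `(C',D') = (f_{i,j}(A')h, h⁻¹f_{i,j}(B'))` is also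
strongly symmetric, and `gcd(n,(k+1)/2) = gcd(n,(ℓ+1)/2) = 1`, then `n`, `k`, `ℓ`
are all odd, `h ∈ {e, a}` and `j = 0`. -/
theorem stmt15 (n : ℕ) [NeZero n] (k ℓ : ℕ)
    (A' B' : Finset (DihedralGroup n))
    (hA'card : A'.card = k) (hB'card : B'.card = ℓ)
    (hNF : A'.card * B'.card = 2 * n - 1 ∧ A' * B' = Finset.univ \ {1})
    (hssA : StronglySymmetric A') (hssB : StronglySymmetric B')
    (i j : ℕ) (hi : Nat.gcd i n = 1) (hj : j < n)
    (h : DihedralGroup n)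
    (C' D' : Finset (DihedralGroup n))
    (hC' : C' = (A'.image (fij n i j)).image (· * h))
    (hD' : D' = (B'.image (fij n i j)).image (h⁻¹ * ·))
    (hssC : StronglySymmetric C') (hssD : StronglySymmetric D')
    (hgk : Nat.gcd n ((k + 1) / 2) = 1) (hgl : Nat.gcd n ((ℓ + 1) / 2) = 1) :
    Odd n ∧ Odd k ∧ Odd ℓ ∧ (h = 1 ∨ h = DihedralGroup.sr 0) ∧ j = 0 := by
  classical
  obtain ⟨h1, h2⟩ := hNF
  have hn1 : 1 ≤ n := Nat.one_le_iff_ne_zero.mpr (NeZero.ne n)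
  obtain ⟨e1, e2⟩ := NFAux.counts A' B' h1 h2
  have hsA := NFAux.card_split A'
  have hsB := NFAux.card_split B'
  rw [hA'card] at hsA
  rw [hB'card] at hsB
  set A0 : Finset (ZMod n) := Finset.univ.filter (fun x => DihedralGroup.r x ∈ A') with hA0
  set A1 : Finset (ZMod n) := Finset.univ.filter (fun x => DihedralGroup.sr x ∈ A') with hA1
  set B0 : Finset (ZMod n) := Finset.univ.filter (fun x => DihedralGroup.r x ∈ B') with hB0
  set B1 : Finset (ZMod n) := Finset.univ.filter (fun x => DihedralGroup.sr x ∈ B') with hB1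
  -- membership characterizations
  have memA0 : ∀ x : ZMod n, x ∈ A0 ↔ DihedralGroup.r x ∈ A' := by
    intro x; rw [hA0]; simp
  have memA1 : ∀ x : ZMod n, x ∈ A1 ↔ DihedralGroup.sr x ∈ A' := by
    intro x; rw [hA1]; simp
  have memB0 : ∀ x : ZMod n, x ∈ B0 ↔ DihedralGroup.r x ∈ B' := by
    intro x; rw [hB0]; simp
  have memB1 : ∀ x : ZMod n, x ∈ B1 ↔ DihedralGroup.sr x ∈ B' := by
    intro x; rw [hB1]; simp
  -- the case distinction on cardinalities
  have hcases : (A0.card = A1.card + 1 ∧ B1.card = B0.card + 1) ∨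
      (A1.card = A0.card + 1 ∧ B0.card = B1.card + 1) := by
    have e1' : ((A0.card : ℤ) * B0.card + A1.card * B1.card) + 1 = n := by exact_mod_cast e1
    have e2' : ((A0.card : ℤ) * B1.card + A1.card * B0.card) = n := by exact_mod_cast e2
    have e3 : ((A0.card : ℤ) - A1.card) * ((B0.card : ℤ) - B1.card) = -1 := by
      linear_combination e1' - e2'
    have hu : ((A0.card : ℤ) - A1.card) = 1 ∨ ((A0.card : ℤ) - A1.card) = -1 :=
      Int.isUnit_iff.mp (isUnit_of_mul_isUnit_left (x := (A0.card : ℤ) - A1.card)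
        (y := (B0.card : ℤ) - B1.card) (by rw [e3]; exact isUnit_one.neg))
    rcases hu with hu | hu
    · left
      rw [hu, one_mul] at e3
      omega
    · right
      rw [hu] at e3
      have : ((B0.card : ℤ) - B1.card) = 1 := by linarith [e3]
      omega
  -- oddness of k and ℓ
  have hkodd : k % 2 = 1 := by rcases hcases with ⟨u, v⟩ | ⟨u, v⟩ <;> omega
  have hlodd : ℓ % 2 = 1 := by rcases hcases with ⟨u, v⟩ | ⟨u, v⟩ <;> omega
  obtain ⟨a, ha⟩ : ∃ a, k = 2 * a + 1 := ⟨k / 2, by omega⟩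
  obtain ⟨c, hc⟩ : ∃ c, ℓ = 2 * c + 1 := ⟨ℓ / 2, by omega⟩
  -- oddness of n
  have hkl : k * ℓ + 1 = 2 * n := by
    rw [hA'card, hB'card] at h1
    omega
  have hn : n = 2 * (a * c) + a + c + 1 := by
    have : (2 * a + 1) * (2 * c + 1) + 1 = 4 * (a * c) + 2 * a + 2 * c + 2 := by ring
    rw [ha, hc] at hkl
    omega
  have hkk : (k + 1) / 2 = a + 1 := by omega
  have hll : (ℓ + 1) / 2 = c + 1 := by omega
  have hnodd : n % 2 = 1 := by
    by_contra hne
    have h2n : 2 ∣ n := by omega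
    have hpar : a % 2 ≠ c % 2 := by omega
    rcases Nat.even_or_odd a with hae | hao
    · have hco : c % 2 = 1 := by
        rcases hae with ⟨w, hw⟩; omega
      have : 2 ∣ Nat.gcd n ((ℓ + 1) / 2) := Nat.dvd_gcd h2n (by omega)
      rw [hgl] at this
      omega
    · have : 2 ∣ Nat.gcd n ((k + 1) / 2) := by
        apply Nat.dvd_gcd h2n
        rcases hao with ⟨w, hw⟩
        omega
      rw [hgk] at this
      omega
  have hOddn : Odd n := Nat.odd_iff.mpr hnodd
  -- the unit i
  have hiu : IsUnit ((i : ℕ) : ZMod n) := (ZMod.isUnit_iff_coprime i n).mpr hi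
  have hinj : Function.Injective (fun x : ZMod n => ((i : ℕ) : ZMod n) * x) :=
    hiu.mul_right_injective
  -- symmetric image sets
  set iA0 : Finset (ZMod n) := A0.image (fun x => ((i : ℕ) : ZMod n) * x) with hiA0
  set iA1 : Finset (ZMod n) := A1.image (fun x => ((i : ℕ) : ZMod n) * x) with hiA1
  set iB0 : Finset (ZMod n) := B0.image (fun x => ((i : ℕ) : ZMod n) * x) with hiB0
  set iB1 : Finset (ZMod n) := B1.image (fun x => ((i : ℕ) : ZMod n) * x) with hiB1
  have hsymA0 : ∀ x ∈ A0, -x ∈ A0 := fun x hx =>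
    (memA0 _).mpr ((hssA x).1.mp ((memA0 _).mp hx))
  have hsymA1 : ∀ x ∈ A1, -x ∈ A1 := fun x hx =>
    (memA1 _).mpr ((hssA x).2.mp ((memA1 _).mp hx))
  have hsymB0 : ∀ x ∈ B0, -x ∈ B0 := fun x hx =>
    (memB0 _).mpr ((hssB x).1.mp ((memB0 _).mp hx))
  have hsymB1 : ∀ x ∈ B1, -x ∈ B1 := fun x hx =>
    (memB1 _).mpr ((hssB x).2.mp ((memB1 _).mp hx))
  have hsymi : ∀ (S : Finset (ZMod n)), (∀ x ∈ S, -x ∈ S) →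
      ∀ y ∈ S.image (fun x => ((i : ℕ) : ZMod n) * x),
        -y ∈ S.image (fun x => ((i : ℕ) : ZMod n) * x) := by
    intro S hS y hy
    obtain ⟨x, hx, rfl⟩ := Finset.mem_image.mp hy
    exact Finset.mem_image.mpr ⟨-x, hS x hx, by ring⟩
  have hsymiA0 : ∀ y ∈ iA0, -y ∈ iA0 := hsymi A0 hsymA0
  have hsymiA1 : ∀ y ∈ iA1, -y ∈ iA1 := hsymi A1 hsymA1
  have hsymiB0 : ∀ y ∈ iB0, -y ∈ iB0 := hsymi B0 hsymB0
  have hsymiB1 : ∀ y ∈ iB1, -y ∈ iB1 := hsymi B1 hsymB1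
  have hciA0 : iA0.card = A0.card := Finset.card_image_of_injective _ hinj
  have hciA1 : iA1.card = A1.card := Finset.card_image_of_injective _ hinj
  have hciB0 : iB0.card = B0.card := Finset.card_image_of_injective _ hinj
  have hciB1 : iB1.card = B1.card := Finset.card_image_of_injective _ hinj
  -- the main structural step: extract t and w with the four annihilation equations
  obtain ⟨t, w, hcaseh, hjw, E1, E2, E3, E4⟩ :
      ∃ t w : ZMod n,
        (h = DihedralGroup.r t ∨ h = DihedralGroup.sr t) ∧
        (t = 0 → (j : ZMod n) = w) ∧
        ((A0.card : ZMod n) * (t + t) = 0) ∧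
        ((A1.card : ZMod n) * (w + w) = 0) ∧
        ((B0.card : ZMod n) * (t + t) = 0) ∧
        ((B1.card : ZMod n) * (w + w) = 0) := by
    cases h with
    | r t =>
      refine ⟨t, (j : ZMod n) + t, Or.inl rfl, (fun h0 => by rw [h0, add_zero]), ?_, ?_, ?_, ?_⟩
      · -- rotations of C' : {t + y : y ∈ iA0}
        have M1 : ∀ z : ZMod n, DihedralGroup.r z ∈ C' ↔ ∃ y ∈ iA0, t + y = z := by
          intro z
          rw [hC']
          simp only [Finset.mem_image, exists_exists_and_eq_and]
          constructor
          · rintro ⟨wg, hwg, hwz⟩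
            cases wg with
            | r x =>
              rw [NFAux.fij_r, DihedralGroup.r_mul_r] at hwz
              refine ⟨((i : ℕ) : ZMod n) * x,
                Finset.mem_image_of_mem _ ((memA0 x).mpr hwg), ?_⟩
              have hz := NFAux.r_inj hwz
              linear_combination hz
            | sr x =>
              rw [NFAux.fij_sr, DihedralGroup.sr_mul_r] at hwz
              exact absurd hwz (by simp)
          · rintro ⟨y, hy, rfl⟩
            obtain ⟨x, hx, rfl⟩ := Finset.mem_image.mp hy
            refine ⟨DihedralGroup.r x, (memA0 x).mp hx, ?_⟩
            rw [NFAux.fij_r, DihedralGroup.r_mul_r, add_comm]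
        have := NFAux.key iA0 hsymiA0 (fun z => DihedralGroup.r z ∈ C') t M1
          (fun z hz => (hssC z).1.mp hz)
        rwa [hciA0] at this
      · -- reflections of C' : {(j + t) + y : y ∈ iA1}
        have M2 : ∀ z : ZMod n, DihedralGroup.sr z ∈ C' ↔
            ∃ y ∈ iA1, ((j : ZMod n) + t) + y = z := by
          intro z
          rw [hC']
          simp only [Finset.mem_image, exists_exists_and_eq_and]
          constructor
          · rintro ⟨wg, hwg, hwz⟩
            cases wg with
            | r x =>
              rw [NFAux.fij_r, DihedralGroup.r_mul_r] at hwz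
              exact absurd hwz (by simp)
            | sr x =>
              rw [NFAux.fij_sr, DihedralGroup.sr_mul_r] at hwz
              refine ⟨((i : ℕ) : ZMod n) * x,
                Finset.mem_image_of_mem _ ((memA1 x).mpr hwg), ?_⟩
              have hz := NFAux.sr_inj hwz
              linear_combination hz
          · rintro ⟨y, hy, rfl⟩
            obtain ⟨x, hx, rfl⟩ := Finset.mem_image.mp hy
            refine ⟨DihedralGroup.sr x, (memA1 x).mp hx, ?_⟩
            rw [NFAux.fij_sr, DihedralGroup.sr_mul_r]
            ring_nf
        have := NFAux.key iA1 hsymiA1 (fun z => DihedralGroup.sr z ∈ C') ((j : ZMod n) + t) M2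
          (fun z hz => (hssC z).2.mp hz)
        rwa [hciA1] at this
      · -- rotations of D' : {(-t) + y : y ∈ iB0}
        have M3 : ∀ z : ZMod n, DihedralGroup.r z ∈ D' ↔ ∃ y ∈ iB0, (-t) + y = z := by
          intro z
          rw [hD']
          simp only [Finset.mem_image, exists_exists_and_eq_and]
          constructor
          · rintro ⟨wg, hwg, hwz⟩
            cases wg with
            | r x =>
              rw [NFAux.fij_r, NFAux.inv_r, DihedralGroup.r_mul_r] at hwz
              refine ⟨((i : ℕ) : ZMod n) * x,
                Finset.mem_image_of_mem _ ((memB0 x).mpr hwg), ?_⟩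
              have hz := NFAux.r_inj hwz
              linear_combination hz
            | sr x =>
              rw [NFAux.fij_sr, NFAux.inv_r, DihedralGroup.r_mul_sr] at hwz
              exact absurd hwz (by simp)
          · rintro ⟨y, hy, rfl⟩
            obtain ⟨x, hx, rfl⟩ := Finset.mem_image.mp hy
            refine ⟨DihedralGroup.r x, (memB0 x).mp hx, ?_⟩
            rw [NFAux.fij_r, NFAux.inv_r, DihedralGroup.r_mul_r]
        have hDk := NFAux.key iB0 hsymiB0 (fun z => DihedralGroup.r z ∈ D') (-t) M3
          (fun z hz => (hssD z).1.mp hz)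
        rw [hciB0] at hDk
        have : (B0.card : ZMod n) * (t + t) = -((B0.card : ZMod n) * (-t + -t)) := by ring
        rw [this, hDk, neg_zero]
      · -- reflections of D' : {(j + t) + y : y ∈ iB1}
        have M4 : ∀ z : ZMod n, DihedralGroup.sr z ∈ D' ↔
            ∃ y ∈ iB1, ((j : ZMod n) + t) + y = z := by
          intro z
          rw [hD']
          simp only [Finset.mem_image, exists_exists_and_eq_and]
          constructor
          · rintro ⟨wg, hwg, hwz⟩
            cases wg with
            | r x =>
              rw [NFAux.fij_r, NFAux.inv_r, DihedralGroup.r_mul_r] at hwz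
              exact absurd hwz (by simp)
            | sr x =>
              rw [NFAux.fij_sr, NFAux.inv_r, DihedralGroup.r_mul_sr] at hwz
              refine ⟨((i : ℕ) : ZMod n) * x,
                Finset.mem_image_of_mem _ ((memB1 x).mpr hwg), ?_⟩
              have hz := NFAux.sr_inj hwz
              linear_combination hz
          · rintro ⟨y, hy, rfl⟩
            obtain ⟨x, hx, rfl⟩ := Finset.mem_image.mp hy
            refine ⟨DihedralGroup.sr x, (memB1 x).mp hx, ?_⟩
            rw [NFAux.fij_sr, NFAux.inv_r, DihedralGroup.r_mul_sr]
            ring_nf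
        have := NFAux.key iB1 hsymiB1 (fun z => DihedralGroup.sr z ∈ D') ((j : ZMod n) + t) M4
          (fun z hz => (hssD z).2.mp hz)
        rwa [hciB1] at this
    | sr t =>
      refine ⟨t, (j : ZMod n) - t, Or.inr rfl, (fun h0 => by rw [h0, sub_zero]), ?_, ?_, ?_, ?_⟩
      · -- reflections of C' : {t + y : y ∈ iA0}  (since t - i•x = t + i•(-x))
        have M1 : ∀ z : ZMod n, DihedralGroup.sr z ∈ C' ↔ ∃ y ∈ iA0, t + y = z := by
          intro z
          rw [hC']
          simp only [Finset.mem_image, exists_exists_and_eq_and]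
          constructor
          · rintro ⟨wg, hwg, hwz⟩
            cases wg with
            | r x =>
              rw [NFAux.fij_r, DihedralGroup.r_mul_sr] at hwz
              refine ⟨((i : ℕ) : ZMod n) * (-x),
                Finset.mem_image_of_mem _ (hsymA0 x ((memA0 x).mpr hwg)), ?_⟩
              have hz := NFAux.sr_inj hwz
              linear_combination hz
            | sr x =>
              rw [NFAux.fij_sr, DihedralGroup.sr_mul_sr] at hwz
              exact absurd hwz (by simp)
          · rintro ⟨y, hy, rfl⟩
            obtain ⟨x, hx, rfl⟩ := Finset.mem_image.mp hy
            refine ⟨DihedralGroup.r (-x), (memA0 _).mp (hsymA0 x hx), ?_⟩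
            rw [NFAux.fij_r, DihedralGroup.r_mul_sr]
            ring_nf
        have := NFAux.key iA0 hsymiA0 (fun z => DihedralGroup.sr z ∈ C') t M1
          (fun z hz => (hssC z).2.mp hz)
        rwa [hciA0] at this
      · -- rotations of C' : {(t - j) + y : y ∈ iA1}
        have M2 : ∀ z : ZMod n, DihedralGroup.r z ∈ C' ↔
            ∃ y ∈ iA1, (t - (j : ZMod n)) + y = z := by
          intro z
          rw [hC']
          simp only [Finset.mem_image, exists_exists_and_eq_and]
          constructor
          · rintro ⟨wg, hwg, hwz⟩
            cases wg with
            | r x =>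
              rw [NFAux.fij_r, DihedralGroup.r_mul_sr] at hwz
              exact absurd hwz (by simp)
            | sr x =>
              rw [NFAux.fij_sr, DihedralGroup.sr_mul_sr] at hwz
              refine ⟨((i : ℕ) : ZMod n) * (-x),
                Finset.mem_image_of_mem _ (hsymA1 x ((memA1 x).mpr hwg)), ?_⟩
              have hz := NFAux.r_inj hwz
              linear_combination hz
          · rintro ⟨y, hy, rfl⟩
            obtain ⟨x, hx, rfl⟩ := Finset.mem_image.mp hy
            refine ⟨DihedralGroup.sr (-x), (memA1 _).mp (hsymA1 x hx), ?_⟩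
            rw [NFAux.fij_sr, DihedralGroup.sr_mul_sr]
            ring_nf
        have hCk := NFAux.key iA1 hsymiA1 (fun z => DihedralGroup.r z ∈ C')
          (t - (j : ZMod n)) M2 (fun z hz => (hssC z).1.mp hz)
        rw [hciA1] at hCk
        have hrw : (A1.card : ZMod n) * (((j : ZMod n) - t) + ((j : ZMod n) - t))
            = -((A1.card : ZMod n) * ((t - (j : ZMod n)) + (t - (j : ZMod n)))) := by ring
        rw [hrw, hCk, neg_zero]
      · -- reflections of D' : {t + y : y ∈ iB0}
        have M3 : ∀ z : ZMod n, DihedralGroup.sr z ∈ D' ↔ ∃ y ∈ iB0, t + y = z := by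
          intro z
          rw [hD']
          simp only [Finset.mem_image, exists_exists_and_eq_and]
          constructor
          · rintro ⟨wg, hwg, hwz⟩
            cases wg with
            | r x =>
              rw [NFAux.fij_r, NFAux.inv_sr, DihedralGroup.sr_mul_r] at hwz
              refine ⟨((i : ℕ) : ZMod n) * x,
                Finset.mem_image_of_mem _ ((memB0 x).mpr hwg), ?_⟩
              have hz := NFAux.sr_inj hwz
              linear_combination hz
            | sr x =>
              rw [NFAux.fij_sr, NFAux.inv_sr, DihedralGroup.sr_mul_sr] at hwz
              exact absurd hwz (by simp)
          · rintro ⟨y, hy, rfl⟩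
            obtain ⟨x, hx, rfl⟩ := Finset.mem_image.mp hy
            refine ⟨DihedralGroup.r x, (memB0 x).mp hx, ?_⟩
            rw [NFAux.fij_r, NFAux.inv_sr, DihedralGroup.sr_mul_r]
        have := NFAux.key iB0 hsymiB0 (fun z => DihedralGroup.sr z ∈ D') t M3
          (fun z hz => (hssD z).2.mp hz)
        rwa [hciB0] at this
      · -- rotations of D' : {(j - t) + y : y ∈ iB1}
        have M4 : ∀ z : ZMod n, DihedralGroup.r z ∈ D' ↔
            ∃ y ∈ iB1, ((j : ZMod n) - t) + y = z := by
          intro z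
          rw [hD']
          simp only [Finset.mem_image, exists_exists_and_eq_and]
          constructor
          · rintro ⟨wg, hwg, hwz⟩
            cases wg with
            | r x =>
              rw [NFAux.fij_r, NFAux.inv_sr, DihedralGroup.sr_mul_r] at hwz
              exact absurd hwz (by simp)
            | sr x =>
              rw [NFAux.fij_sr, NFAux.inv_sr, DihedralGroup.sr_mul_sr] at hwz
              refine ⟨((i : ℕ) : ZMod n) * x,
                Finset.mem_image_of_mem _ ((memB1 x).mpr hwg), ?_⟩
              have hz := NFAux.r_inj hwz
              linear_combination hz
          · rintro ⟨y, hy, rfl⟩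
            obtain ⟨x, hx, rfl⟩ := Finset.mem_image.mp hy
            refine ⟨DihedralGroup.sr x, (memB1 x).mp hx, ?_⟩
            rw [NFAux.fij_sr, NFAux.inv_sr, DihedralGroup.sr_mul_sr]
            ring_nf
        have := NFAux.key iB1 hsymiB1 (fun z => DihedralGroup.r z ∈ D')
          ((j : ZMod n) - t) M4 (fun z hz => (hssD z).1.mp hz)
        rwa [hciB1] at this
  -- now finish: get t = 0 and w = 0
  have ht0 : t = 0 ∧ (j : ZMod n) = 0 := by
    rcases hcases with ⟨hu, hv⟩ | ⟨hu, hv⟩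
    · -- A0.card = (k+1)/2, B1.card = (ℓ+1)/2
      have hgA : Nat.Coprime A0.card n := by
        have : A0.card = (k + 1) / 2 := by omega
        rw [this, Nat.coprime_comm]
        exact hgk
      have hgB : Nat.Coprime B1.card n := by
        have : B1.card = (ℓ + 1) / 2 := by omega
        rw [this, Nat.coprime_comm]
        exact hgl
      have ht : t = 0 := NFAux.cancel2 hOddn hgA E1
      have hw : w = 0 := NFAux.cancel2 hOddn hgB E4
      exact ⟨ht, by rw [hjw ht, hw]⟩
    · -- A1.card = (k+1)/2, B0.card = (ℓ+1)/2
      have hgA : Nat.Coprime A1.card n := by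
        have : A1.card = (k + 1) / 2 := by omega
        rw [this, Nat.coprime_comm]
        exact hgk
      have hgB : Nat.Coprime B0.card n := by
        have : B0.card = (ℓ + 1) / 2 := by omega
        rw [this, Nat.coprime_comm]
        exact hgl
      have ht : t = 0 := NFAux.cancel2 hOddn hgB E3
      have hw : w = 0 := NFAux.cancel2 hOddn hgA E2
      exact ⟨ht, by rw [hjw ht, hw]⟩
  obtain ⟨ht, hjz⟩ := ht0
  have hjn : j = 0 := by
    have : (n : ℕ) ∣ j := (ZMod.natCast_eq_zero_iff j n).mp hjz
    exact Nat.eq_zero_of_dvd_of_lt this hj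
  refine ⟨hOddn, Nat.odd_iff.mpr hkodd, Nat.odd_iff.mpr hlodd, ?_, hjn⟩
  rcases hcaseh with rfl | rfl
  · left
    rw [ht]
    exact DihedralGroup.one_def.symm
  · right
    rw [ht]
end

section
/- Suppose (A',B') and (C',D') are equivalent strongly symmetric near-factorizations of the dihedral group D_n with |A'| = k, |B'| = ℓ, C' = f_{i,j}(A')h and D' = h⁻¹ f_{i,j}(B'), and suppose gcd(n, (k+1)/2) = gcd(n, (ℓ+1)/2) = 1. Let (A,B) and (C,D) be obtained from (A',B') and (C',D') respectively by applying the inverse Pêcher transform. Then (A,B) and (C,D) are equivalent symmetric near-factorizations of Z_{2n}. -/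
open Pointwise

/-- The Pêcher transform sends `x ∈ Z_{2n}` to `a^{x mod 2} b^{x mod n} ∈ D_n`. -/
def pecher (n : ℕ) (x : ZMod (2 * n)) : DihedralGroup n :=
  if x.val % 2 = 0 then DihedralGroup.r (x.val : ZMod n)
  else DihedralGroup.sr (x.val : ZMod n)

/-- The inverse Pêcher transform of a subset `X'` of `D_n`: the set of all
`x ∈ Z_{2n}` with `a^{x mod 2} b^{x mod n} ∈ X'`. -/
def ipecher (n : ℕ) [NeZero n] (X' : Finset (DihedralGroup n)) :
    Finset (ZMod (2 * n)) :=
  Finset.univ.filter (fun x => pecher n x ∈ X')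

set_option linter.unusedSectionVars false
set_option linter.unusedVariables false
set_option maxHeartbeats 1000000
namespace NFaux
open DihedralGroup Finset

variable {n : ℕ} [NeZero n]

lemma ndvd : n ∣ 2 * n := Dvd.intro_left 2 rfl
lemma tdvd : 2 ∣ 2 * n := Dvd.intro n rfl

lemma cast_val_mod (a : ℕ) : (((a % (2*n) : ℕ)) : ZMod n) = (a : ZMod n) := by
  rw [ZMod.natCast_eq_natCast_iff]
  exact (Nat.mod_modEq _ _).of_dvd ndvd

lemma cast_val_add (x y : ZMod (2*n)) :
    (((x+y).val : ℕ) : ZMod n) = (x.val : ZMod n) + (y.val : ZMod n) := by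
  rw [ZMod.val_add, cast_val_mod]; push_cast; ring

lemma cast_val_mul (x y : ZMod (2*n)) :
    (((x*y).val : ℕ) : ZMod n) = (x.val : ZMod n) * (y.val : ZMod n) := by
  rw [ZMod.val_mul, cast_val_mod]; push_cast; ring

lemma cast_val_neg (x : ZMod (2*n)) :
    (((-x).val : ℕ) : ZMod n) = -((x.val : ℕ) : ZMod n) := by
  rcases eq_or_ne x 0 with rfl | hx
  · simp
  · rw [ZMod.neg_val, if_neg hx]
    have h1 : x.val ≤ 2*n := le_of_lt (ZMod.val_lt x)
    rw [Nat.cast_sub h1]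
    have : ((2*n : ℕ) : ZMod n) = 0 := by
      push_cast; simp
    rw [this]; ring

lemma par_add (x y : ZMod (2*n)) : (x+y).val % 2 = (x.val + y.val) % 2 := by
  rw [ZMod.val_add]; exact Nat.mod_mod_of_dvd _ tdvd

lemma par_mul (x y : ZMod (2*n)) : (x*y).val % 2 = (x.val * y.val) % 2 := by
  rw [ZMod.val_mul]; exact Nat.mod_mod_of_dvd _ tdvd

lemma par_neg (hn : Odd n) (x : ZMod (2*n)) : (-x).val % 2 = x.val % 2 := by
  rcases eq_or_ne x 0 with rfl | hx
  · simp
  · rw [ZMod.neg_val, if_neg hx]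
    have h1 : x.val < 2*n := ZMod.val_lt x
    omega

lemma pecher_even {x : ZMod (2*n)} (hx : x.val % 2 = 0) :
    pecher n x = DihedralGroup.r (x.val : ZMod n) := if_pos hx

lemma pecher_odd {x : ZMod (2*n)} (hx : x.val % 2 = 1) :
    pecher n x = DihedralGroup.sr (x.val : ZMod n) := by
  rw [pecher, if_neg (by omega)]

lemma pecher_zero : pecher n 0 = 1 := by
  rw [pecher]; simp

lemma val_injective {x y : ZMod (2*n)} (h : x.val = y.val) : x = y := by
  have := ZMod.val_cast_of_lt (ZMod.val_lt x)
  have := ZMod.val_cast_of_lt (ZMod.val_lt y)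
  calc x = ((x.val : ℕ) : ZMod (2*n)) := by rw [ZMod.natCast_val, ZMod.cast_id]
  _ = ((y.val : ℕ) : ZMod (2*n)) := by rw [h]
  _ = y := by rw [ZMod.natCast_val, ZMod.cast_id]

lemma pecher_inj (hn : Odd n) : Function.Injective (pecher n) := by
  intro x y hxy
  have hco : Nat.Coprime 2 n := Nat.coprime_two_left.mpr hn
  have key : x.val % 2 = y.val % 2 ∧ (x.val : ZMod n) = (y.val : ZMod n) := by
    by_cases h1 : x.val % 2 = 0 <;> by_cases h2 : y.val % 2 = 0
    · rw [pecher_even h1, pecher_even h2] at hxy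
      exact ⟨by omega, by injection hxy⟩
    · rw [pecher_even h1, pecher_odd (by omega)] at hxy
      exact absurd hxy (by simp)
    · rw [pecher_odd (by omega), pecher_even h2] at hxy
      exact absurd hxy (by simp)
    · rw [pecher_odd (by omega), pecher_odd (by omega)] at hxy
      exact ⟨by omega, by injection hxy⟩
  obtain ⟨hp, hc⟩ := key
  have hmn : x.val ≡ y.val [MOD n] := (ZMod.natCast_eq_natCast_iff _ _ _).mp hc
  have hm2 : x.val ≡ y.val [MOD 2] := by unfold Nat.ModEq; omega
  have hmod := (Nat.modEq_and_modEq_iff_modEq_mul hco).mp ⟨hm2, hmn⟩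
  have hx := ZMod.val_lt x; have hy := ZMod.val_lt y
  apply NFaux.val_injective
  rw [Nat.ModEq, Nat.mod_eq_of_lt hx, Nat.mod_eq_of_lt hy] at hmod
  exact hmod

lemma pecher_bij (hn : Odd n) : Function.Bijective (pecher n) :=
  (Fintype.bijective_iff_injective_and_card _).mpr
    ⟨pecher_inj hn, by rw [ZMod.card, DihedralGroup.card]⟩

lemma mem_ipecher {X' : Finset (DihedralGroup n)} {x : ZMod (2*n)} :
    x ∈ ipecher n X' ↔ pecher n x ∈ X' := by simp [ipecher]

lemma card_ipecher (hn : Odd n) (X' : Finset (DihedralGroup n)) :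
    (ipecher n X').card = X'.card := by
  apply Finset.card_bij (fun x _ => pecher n x)
  · intro a ha; exact mem_ipecher.mp ha
  · intro a _ b _ hab; exact pecher_inj hn hab
  · intro b hb
    obtain ⟨x, rfl⟩ := (pecher_bij hn).2 b
    exact ⟨x, mem_ipecher.mpr hb, rfl⟩

def dneg : DihedralGroup n → DihedralGroup n
  | DihedralGroup.r u => DihedralGroup.r (-u)
  | DihedralGroup.sr u => DihedralGroup.sr (-u)

lemma pecher_neg (hn : Odd n) (x : ZMod (2*n)) :
    pecher n (-x) = dneg (pecher n x) := by
  by_cases h2 : x.val % 2 = 0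
  · rw [pecher_even h2, pecher_even (by rw [par_neg hn]; exact h2), cast_val_neg]; rfl
  · have h2' : x.val % 2 = 1 := by omega
    rw [pecher_odd h2', pecher_odd (by rw [par_neg hn]; exact h2'), cast_val_neg]; rfl

lemma ss_iff {X : Finset (DihedralGroup n)} (hss : StronglySymmetric X)
    (g : DihedralGroup n) : g ∈ X ↔ dneg g ∈ X := by
  cases g with
  | r u => exact (hss u).1
  | sr u => exact (hss u).2

lemma mem_ipecher_neg (hn : Odd n) {X : Finset (DihedralGroup n)}
    (hss : StronglySymmetric X) {x : ZMod (2*n)} (hx : x ∈ ipecher n X) :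
    -x ∈ ipecher n X := by
  rw [mem_ipecher] at hx ⊢
  rw [pecher_neg hn]
  exact (ss_iff hss _).mp hx

lemma ipecher_sym (hn : Odd n) {X : Finset (DihedralGroup n)}
    (hss : StronglySymmetric X) : ipecher n X = -(ipecher n X) := by
  ext x
  rw [Finset.mem_neg]
  constructor
  · intro hx; exact ⟨-x, mem_ipecher_neg hn hss hx, neg_neg x⟩
  · rintro ⟨y, hy, rfl⟩; exact mem_ipecher_neg hn hss hy


lemma prod_even (hn : Odd n) (x y : ZMod (2*n)) (hy : y.val % 2 = 0) :
    pecher n x * pecher n y = pecher n (x + y) := by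
  by_cases hx : x.val % 2 = 0
  · rw [pecher_even hx, pecher_even hy, pecher_even (by rw [par_add]; omega),
      cast_val_add, DihedralGroup.r_mul_r]
  · have hx' : x.val % 2 = 1 := by omega
    rw [pecher_odd hx', pecher_even hy, pecher_odd (by rw [par_add]; omega),
      cast_val_add, DihedralGroup.sr_mul_r]

lemma prod_odd (hn : Odd n) (x y : ZMod (2*n)) (hy : y.val % 2 = 1) :
    pecher n x * pecher n y = pecher n (y - x) := by
  have hsub : ∀ u v : ZMod (2*n), u - v = u + (-v) := fun u v => sub_eq_add_neg u v
  by_cases hx : x.val % 2 = 0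
  · rw [pecher_even hx, pecher_odd hy, pecher_odd (by rw [hsub, par_add]; have := par_neg hn x; omega)]
    rw [hsub, cast_val_add, cast_val_neg, DihedralGroup.r_mul_sr, sub_eq_add_neg]
  · have hx' : x.val % 2 = 1 := by omega
    rw [pecher_odd hx', pecher_odd hy, pecher_even (by rw [hsub, par_add]; have := par_neg hn x; omega)]
    rw [hsub, cast_val_add, cast_val_neg, DihedralGroup.sr_mul_sr, sub_eq_add_neg]

lemma add_iff (hn : Odd n) {A' B' : Finset (DihedralGroup n)}
    (hA : StronglySymmetric A') (z : ZMod (2*n)) :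
    z ∈ ipecher n A' + ipecher n B' ↔ pecher n z ∈ A' * B' := by
  constructor
  · rw [Finset.mem_add]
    rintro ⟨x, hx, y, hy, rfl⟩
    rw [Finset.mem_mul]
    by_cases hy2 : y.val % 2 = 0
    · exact ⟨pecher n x, mem_ipecher.mp hx, pecher n y, mem_ipecher.mp hy,
        prod_even hn x y hy2⟩
    · refine ⟨pecher n (-x), mem_ipecher.mp (mem_ipecher_neg hn hA hx),
        pecher n y, mem_ipecher.mp hy, ?_⟩
      rw [prod_odd hn (-x) y (by omega)]
      congr 1; ring
  · rw [Finset.mem_mul]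
    rintro ⟨a, ha, b, hb, hab⟩
    obtain ⟨x, rfl⟩ := (pecher_bij hn).2 a
    obtain ⟨y, rfl⟩ := (pecher_bij hn).2 b
    rw [Finset.mem_add]
    by_cases hy2 : y.val % 2 = 0
    · rw [prod_even hn x y hy2] at hab
      exact ⟨x, mem_ipecher.mpr ha, y, mem_ipecher.mpr hb, pecher_inj hn hab⟩
    · rw [prod_odd hn x y (by omega)] at hab
      have hz := pecher_inj hn hab
      refine ⟨-x, mem_ipecher_neg hn (by exact hA) (mem_ipecher.mpr ha),
        y, mem_ipecher.mpr hb, ?_⟩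
      rw [← hz]; ring

lemma NF_transfer (hn : Odd n) {A' B' : Finset (DihedralGroup n)}
    (hA : StronglySymmetric A')
    (hAB : A' * B' = Finset.univ \ {1}) :
    ipecher n A' + ipecher n B' = Finset.univ \ {0} := by
  ext z
  rw [add_iff hn hA, hAB, Finset.mem_sdiff, Finset.mem_sdiff,
    Finset.mem_singleton, Finset.mem_singleton]
  constructor
  · rintro ⟨-, hz⟩
    refine ⟨Finset.mem_univ _, fun h0 => hz ?_⟩
    rw [h0, pecher_zero]
  · rintro ⟨-, hz⟩
    refine ⟨Finset.mem_univ _, fun h1 => hz ?_⟩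
    have : pecher n z = pecher n 0 := by rw [pecher_zero]; exact h1
    exact pecher_inj hn this


def fijHom (n i j : ℕ) : DihedralGroup n →* DihedralGroup n where
  toFun := fij n i j
  map_one' := by rw [DihedralGroup.one_def]; simp only [fij, mul_zero]
  map_mul' := by
    rintro (u | u) (v | v) <;>
      simp only [fij, DihedralGroup.r_mul_r, DihedralGroup.r_mul_sr,
        DihedralGroup.sr_mul_r, DihedralGroup.sr_mul_sr] <;> ring_nf

lemma fij_inj (i j : ℕ) (hi : Nat.gcd i n = 1) :
    Function.Injective (fij n i j) := by
  have hu : IsUnit ((i : ℕ) : ZMod n) := (ZMod.isUnit_iff_coprime i n).mpr hi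
  rintro (u | u) (v | v) he <;> simp only [fij] at he
  · have : ((i : ℕ) : ZMod n) * u = ((i : ℕ) : ZMod n) * v := by injection he
    rw [hu.mul_left_cancel this]
  · exact absurd he (by simp)
  · exact absurd he (by simp)
  · have : ((j : ℕ) : ZMod n) + ((i : ℕ) : ZMod n) * u
        = ((j : ℕ) : ZMod n) + ((i : ℕ) : ZMod n) * v := by injection he
    have h2 : ((i : ℕ) : ZMod n) * u = ((i : ℕ) : ZMod n) * v := by
      exact add_left_cancel this
    rw [hu.mul_left_cancel h2]

lemma fij_surj (i j : ℕ) (hi : Nat.gcd i n = 1) :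
    Function.Surjective (fij n i j) :=
  Finite.surjective_of_injective (fij_inj i j hi)

lemma CD_prod (i j : ℕ) (hi : Nat.gcd i n = 1) (h : DihedralGroup n)
    {A' B' : Finset (DihedralGroup n)}
    (hAB : A' * B' = Finset.univ \ {1}) :
    ((A'.image (fij n i j)).image (· * h)) * ((B'.image (fij n i j)).image (h⁻¹ * ·))
      = Finset.univ \ {1} := by
  have step1 : ((A'.image (fij n i j)).image (· * h)) * ((B'.image (fij n i j)).image (h⁻¹ * ·))
      = (A'.image (fij n i j)) * (B'.image (fij n i j)) := by
    ext g
    simp only [Finset.mem_mul, Finset.mem_image]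
    constructor
    · rintro ⟨x, ⟨a, ha, rfl⟩, y, ⟨b, hb, rfl⟩, rfl⟩
      exact ⟨a, ha, b, hb, by group⟩
    · rintro ⟨a, ha, b, hb, rfl⟩
      exact ⟨a * h, ⟨a, ha, rfl⟩, h⁻¹ * b, ⟨b, hb, rfl⟩, by group⟩
  have hfc : A'.image (fij n i j) = A'.image ⇑(fijHom n i j) := rfl
  have hfc' : B'.image (fij n i j) = B'.image ⇑(fijHom n i j) := rfl
  rw [step1, hfc, hfc', ← Finset.image_mul, hAB,
    Finset.image_sdiff _ _ (show Function.Injective ⇑(fijHom n i j) from fij_inj i j hi)]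
  congr 1
  · exact Finset.image_univ_of_surjective (fij_surj i j hi)
  · rw [Finset.image_singleton]
    congr 1
    exact map_one (fijHom n i j)

lemma C_card (i j : ℕ) (hi : Nat.gcd i n = 1) (h : DihedralGroup n)
    (A' : Finset (DihedralGroup n)) :
    ((A'.image (fij n i j)).image (· * h)).card = A'.card := by
  rw [Finset.card_image_of_injective _ (mul_left_injective h),
    Finset.card_image_of_injective _ (fij_inj i j hi)]

lemma D_card (i j : ℕ) (hi : Nat.gcd i n = 1) (h : DihedralGroup n)
    (B' : Finset (DihedralGroup n)) :
    ((B'.image (fij n i j)).image (h⁻¹ * ·)).card = B'.card := by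
  rw [Finset.card_image_of_injective _ (mul_right_injective h⁻¹),
    Finset.card_image_of_injective _ (fij_inj i j hi)]


def Rset (X : Finset (DihedralGroup n)) : Finset (ZMod n) :=
  Finset.univ.filter (fun u => DihedralGroup.r u ∈ X)

def Sset (X : Finset (DihedralGroup n)) : Finset (ZMod n) :=
  Finset.univ.filter (fun u => DihedralGroup.sr u ∈ X)

lemma r_inj : Function.Injective (DihedralGroup.r : ZMod n → DihedralGroup n) :=
  fun a b h => by injection h

lemma sr_inj : Function.Injective (DihedralGroup.sr : ZMod n → DihedralGroup n) :=
  fun a b h => by injection h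

def isR : DihedralGroup n → Bool
  | DihedralGroup.r _ => true
  | DihedralGroup.sr _ => false

lemma isR_mul (a b : DihedralGroup n) : isR (a * b) = (isR a == isR b) := by
  cases a <;> cases b <;>
    simp [isR, DihedralGroup.r_mul_r, DihedralGroup.r_mul_sr,
      DihedralGroup.sr_mul_r, DihedralGroup.sr_mul_sr]

lemma filter_isR_true (X : Finset (DihedralGroup n)) :
    X.filter (fun g => isR g = true) = (Rset X).image DihedralGroup.r := by
  ext g; rw [Finset.mem_filter]; cases g <;> simp [Rset, isR]

lemma filter_isR_false (X : Finset (DihedralGroup n)) :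
    X.filter (fun g => isR g = false) = (Sset X).image DihedralGroup.sr := by
  ext g; rw [Finset.mem_filter]; cases g <;> simp [Sset, isR]

lemma card_filter_isR_true (X : Finset (DihedralGroup n)) :
    (X.filter (fun g => isR g = true)).card = (Rset X).card := by
  rw [filter_isR_true, Finset.card_image_of_injective _ r_inj]

lemma card_filter_isR_false (X : Finset (DihedralGroup n)) :
    (X.filter (fun g => isR g = false)).card = (Sset X).card := by
  rw [filter_isR_false, Finset.card_image_of_injective _ sr_inj]

lemma card_split (X : Finset (DihedralGroup n)) :
    X.card = (Rset X).card + (Sset X).card := by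
  have h1 : X = X.filter (fun g => isR g = true) ∪ X.filter (fun g => isR g = false) := by
    rw [← Finset.filter_or]
    apply (Finset.filter_true_of_mem _).symm
    intro g _; cases isR g <;> simp
  conv_lhs => rw [h1]
  rw [Finset.card_union_of_disjoint, card_filter_isR_true, card_filter_isR_false]
  rw [Finset.disjoint_left]
  intro g hg hg'
  simp only [Finset.mem_filter] at hg hg'
  rw [hg.2] at hg'; exact absurd hg'.2 (by simp)

lemma card_univ_sdiff_one :
    ((Finset.univ \ {1} : Finset (DihedralGroup n))).card = 2 * n - 1 := by
  rw [Finset.card_sdiff_of_subset (by simp), Finset.card_singleton, Finset.card_univ,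
    DihedralGroup.card]

lemma pair_count (t : Bool) {A' B' : Finset (DihedralGroup n)}
    (hcard : A'.card * B'.card = 2 * n - 1)
    (hAB : A' * B' = Finset.univ \ {1}) :
    (Rset A').card * (B'.filter (fun g => isR g = t)).card
      + (Sset A').card * (B'.filter (fun g => isR g = !t)).card
    = ((Finset.univ \ {1} : Finset (DihedralGroup n)).filter
        (fun g => isR g = t)).card := by
  have hinj : Set.InjOn (fun p : DihedralGroup n × DihedralGroup n => p.1 * p.2)
      ↑(A' ×ˢ B') := by
    apply Finset.card_image_iff.mp
    have himg : (A' ×ˢ B').image (fun p : DihedralGroup n × DihedralGroup n => p.1 * p.2)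
        = A' * B' := Finset.image_mul_product
    rw [himg, hAB, card_univ_sdiff_one, Finset.card_product, hcard]
  -- the filtered pairs
  have key : ((A' ×ˢ B').filter (fun p => isR (p.1 * p.2) = t)).card
      = ((Finset.univ \ {1} : Finset (DihedralGroup n)).filter
          (fun g => isR g = t)).card := by
    apply Finset.card_bij (fun p _ => p.1 * p.2)
    · intro p hp
      rw [Finset.mem_filter] at hp ⊢
      obtain ⟨hp1, hp2⟩ := hp
      have hpp := Finset.mem_product.mp hp1
      exact ⟨hAB ▸ Finset.mul_mem_mul hpp.1 hpp.2, hp2⟩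
    · intro p hp q hq he
      exact hinj (Finset.mem_coe.mpr (Finset.mem_of_mem_filter _ hp))
        (Finset.mem_coe.mpr (Finset.mem_of_mem_filter _ hq)) he
    · intro g hg
      rw [Finset.mem_filter] at hg
      obtain ⟨hg1, hg2⟩ := hg
      rw [← hAB, Finset.mem_mul] at hg1
      obtain ⟨a, ha, b, hb, rfl⟩ := hg1
      exact ⟨(a, b), Finset.mem_filter.mpr
        ⟨Finset.mem_product.mpr ⟨ha, hb⟩, hg2⟩, rfl⟩
  rw [← key]
  have hsplit : (A' ×ˢ B').filter (fun p => isR (p.1 * p.2) = t)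
      = (A'.filter (fun g => isR g = true) ×ˢ B'.filter (fun g => isR g = t))
        ∪ (A'.filter (fun g => isR g = false) ×ˢ B'.filter (fun g => isR g = !t)) := by
    rw [← Finset.filter_product, ← Finset.filter_product, ← Finset.filter_or]
    apply Finset.filter_congr
    intro p _
    rw [isR_mul]
    cases hA : isR p.1 <;> cases hB : isR p.2 <;> cases t <;> simp
  rw [hsplit, Finset.card_union_of_disjoint, Finset.card_product, Finset.card_product,
    card_filter_isR_true, card_filter_isR_false]
  rw [Finset.disjoint_left]
  rintro ⟨a, b⟩ hab hab'
  rw [Finset.mem_product, Finset.mem_filter, Finset.mem_filter] at hab hab'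
  rw [hab.1.2] at hab'
  exact absurd hab'.1.2 (by simp)

lemma card_target_true :
    ((Finset.univ \ {1} : Finset (DihedralGroup n)).filter
      (fun g => isR g = true)).card = n - 1 := by
  have h1 : (Finset.univ \ {1} : Finset (DihedralGroup n)).filter (fun g => isR g = true)
      = (Finset.univ.filter (fun g : DihedralGroup n => isR g = true)) \ {1} := by
    ext g
    simp only [Finset.mem_filter, Finset.mem_sdiff, Finset.mem_univ, true_and,
      Finset.mem_singleton]
    tauto
  rw [h1, Finset.card_sdiff_of_subset, Finset.card_singleton, card_filter_isR_true]
  · congr 1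
    have : Rset (Finset.univ : Finset (DihedralGroup n)) = Finset.univ := by
      ext u; simp [Rset]
    rw [this, Finset.card_univ, ZMod.card]
  · intro g hg
    rw [Finset.mem_singleton] at hg; subst hg
    rw [Finset.mem_filter]
    exact ⟨Finset.mem_univ _, by rw [DihedralGroup.one_def]; rfl⟩

lemma card_target_false :
    ((Finset.univ \ {1} : Finset (DihedralGroup n)).filter
      (fun g => isR g = false)).card = n := by
  have h1 : (Finset.univ \ {1} : Finset (DihedralGroup n)).filter (fun g => isR g = false)
      = Finset.univ.filter (fun g : DihedralGroup n => isR g = false) := by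
    ext g
    simp only [Finset.mem_filter, Finset.mem_sdiff, Finset.mem_univ, true_and,
      Finset.mem_singleton]
    constructor
    · tauto
    · intro hg
      refine ⟨fun h1 => ?_, hg⟩
      rw [h1, DihedralGroup.one_def] at hg
      exact absurd hg (by simp [isR])
  rw [h1, card_filter_isR_false]
  have : Sset (Finset.univ : Finset (DihedralGroup n)) = Finset.univ := by
    ext u; simp [Sset]
  rw [this, Finset.card_univ, ZMod.card]

lemma counts {A' B' : Finset (DihedralGroup n)}
    (hcard : A'.card * B'.card = 2 * n - 1)
    (hAB : A' * B' = Finset.univ \ {1}) :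
    (Rset A').card * (Rset B').card + (Sset A').card * (Sset B').card = n - 1 ∧
    (Rset A').card * (Sset B').card + (Sset A').card * (Rset B').card = n := by
  constructor
  · have := pair_count true hcard hAB
    rwa [card_target_true, show (!true) = false from rfl,
      card_filter_isR_true, card_filter_isR_false] at this
  · have := pair_count false hcard hAB
    rwa [card_target_false, show (!false) = true from rfl,
      card_filter_isR_true, card_filter_isR_false] at this


lemma n_odd {k l : ℕ} (hn : n ≠ 0) (hkl : k * l = 2 * n - 1)
    (hgk : Nat.gcd n ((k + 1) / 2) = 1) (hgl : Nat.gcd n ((l + 1) / 2) = 1) :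
    Odd n := by
  rw [Nat.odd_iff]
  by_contra hpar
  have hne : n % 2 = 0 := by omega
  -- k and l are odd
  have hkodd : k % 2 = 1 ∧ l % 2 = 1 := by
    have hm := Nat.mul_mod k l 2
    rcases Nat.mod_two_eq_zero_or_one k with hk | hk <;>
      rcases Nat.mod_two_eq_zero_or_one l with hl | hl <;>
      rw [hk, hl] at hm <;> simp at hm <;> omega
  -- (k+1)/2 is odd since gcd with even n is 1
  have hk2 : ((k + 1) / 2) % 2 = 1 := by
    by_contra hc
    have h2 : 2 ∣ Nat.gcd n ((k + 1) / 2) :=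
      Nat.dvd_gcd (by omega) (by omega)
    omega
  have hl2 : ((l + 1) / 2) % 2 = 1 := by
    by_contra hc
    have h2 : 2 ∣ Nat.gcd n ((l + 1) / 2) :=
      Nat.dvd_gcd (by omega) (by omega)
    omega
  -- hence k ≡ l ≡ 1 mod 4
  have hk4 : k % 4 = 1 := by omega
  have hl4 : l % 4 = 1 := by omega
  obtain ⟨a, ha⟩ : ∃ a, k = 4 * a + 1 := ⟨k / 4, by omega⟩
  obtain ⟨b, hb⟩ : ∃ b, l = 4 * b + 1 := ⟨l / 4, by omega⟩
  subst ha hb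
  have : (4 * a + 1) * (4 * b + 1) = 4 * (4 * a * b + a + b) + 1 := by ring
  omega

lemma kr_structure {kr ks lr ls k l : ℕ} (hn : n ≠ 0)
    (hk : kr + ks = k) (hl : lr + ls = l)
    (h1 : kr * lr + ks * ls = n - 1) (h2 : kr * ls + ks * lr = n) :
    (kr = (k + 1) / 2 ∧ ls = (l + 1) / 2) ∨ (ks = (k + 1) / 2 ∧ lr = (l + 1) / 2) := by
  have hn1 : 1 ≤ n := Nat.one_le_iff_ne_zero.mpr hn
  have e1 : (kr : ℤ) * lr + ks * ls = (n : ℤ) - 1 := by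
    have h1' : ((kr * lr + ks * ls : ℕ) : ℤ) = ((n - 1 : ℕ) : ℤ) := by rw [h1]
    rw [Nat.cast_sub hn1] at h1'
    push_cast at h1'
    convert h1' using 1
  have e2 : (kr : ℤ) * ls + ks * lr = (n : ℤ) := by
    have h2' : ((kr * ls + ks * lr : ℕ) : ℤ) = ((n : ℕ) : ℤ) := by rw [h2]
    push_cast at h2'
    convert h2' using 1
  have hab : ((kr : ℤ) - ks) * ((lr : ℤ) - ls) = -1 := by linear_combination e1 - e2
  have hu : IsUnit ((kr : ℤ) - ks) :=
    IsUnit.of_mul_eq_one (-((lr : ℤ) - ls)) (by linear_combination -hab)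
  rcases Int.isUnit_iff.mp hu with hcase | hcase
  · left
    have hb : (lr : ℤ) - ls = -1 := by rw [hcase] at hab; linarith
    constructor <;> omega
  · right
    have hb : (lr : ℤ) - ls = 1 := by rw [hcase] at hab; linarith
    constructor <;> omega


lemma orbit_dvd_aux {G : Type*} [AddCommGroup G] [Fintype G] [DecidableEq G]
    (c : G) : ∀ (N : ℕ) (T : Finset G), T.card ≤ N →
    (∀ t ∈ T, t + c ∈ T) → addOrderOf c ∣ T.card := by
  intro N
  induction N with
  | zero =>
    intro T hT _
    rw [Nat.le_zero] at hT
    simp [hT]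
  | succ N ih =>
    intro T hcard hT
    rcases T.eq_empty_or_nonempty with rfl | ⟨t, ht⟩
    · simp
    set d := addOrderOf c with hd
    have hd0 : 0 < d := addOrderOf_pos c
    set C : Finset G := (Finset.range d).image (fun m => t + m • c) with hC
    have hsub2 : ∀ m : ℕ, t + m • c ∈ T := by
      intro m
      induction m with
      | zero => simpa
      | succ m ihm =>
        have := hT _ ihm
        rwa [succ_nsmul, ← add_assoc]
    have hCT : C ⊆ T := by
      intro g hg
      rw [hC, Finset.mem_image] at hg
      obtain ⟨m, _, rfl⟩ := hg
      exact hsub2 m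
    have cancel : ∀ m1 m2 : ℕ, m1 ≤ m2 → m1 • c = m2 • c → (m2 - m1) • c = 0 := by
      intro m1 m2 hle hsm
      have hsum : (m2 - m1) • c + m1 • c = m2 • c := by
        rw [← add_nsmul]; congr 1; omega
      rw [hsm] at hsum
      nth_rewrite 2 [← zero_add (m2 • c)] at hsum
      exact add_right_cancel hsum
    have hCcard : C.card = d := by
      rw [hC, Finset.card_image_of_injOn, Finset.card_range]
      intro m1 h1 m2 h2 he
      simp only [Finset.coe_range, Set.mem_Iio] at h1 h2
      have hsm : m1 • c = m2 • c := add_left_cancel he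
      rcases le_total m1 m2 with hle | hle
      · have hdvd := addOrderOf_dvd_iff_nsmul_eq_zero.mpr (cancel _ _ hle hsm)
        have hz := Nat.eq_zero_of_dvd_of_lt hdvd (show m2 - m1 < d by omega)
        omega
      · have hdvd := addOrderOf_dvd_iff_nsmul_eq_zero.mpr (cancel _ _ hle hsm.symm)
        have hz := Nat.eq_zero_of_dvd_of_lt hdvd (show m1 - m2 < d by omega)
        omega
    have hT' : ∀ s ∈ T \ C, s + c ∈ T \ C := by
      intro s hs
      rw [Finset.mem_sdiff] at hs ⊢
      obtain ⟨hsT, hsC⟩ := hs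
      refine ⟨hT _ hsT, fun hmem => hsC ?_⟩
      rw [hC, Finset.mem_image] at hmem ⊢
      obtain ⟨m, hm, he⟩ := hmem
      rw [Finset.mem_range] at hm
      cases m with
      | zero =>
        refine ⟨d - 1, Finset.mem_range.mpr (by omega), ?_⟩
        simp only [zero_nsmul, add_zero] at he
        -- he : t = s + c ; want t + (d-1) • c = s
        have hdc : d • c = 0 := addOrderOf_nsmul_eq_zero c
        have : t + (d - 1) • c + c = s + c := by
          rw [← he]
          calc t + (d - 1) • c + c = t + ((d - 1) • c + 1 • c) := by
                rw [one_nsmul]; abel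
          _ = t + d • c := by rw [← add_nsmul]; congr 2; omega
          _ = t := by rw [hdc, add_zero]
        exact add_right_cancel this
      | succ m =>
        refine ⟨m, Finset.mem_range.mpr (by omega), ?_⟩
        rw [succ_nsmul, ← add_assoc] at he
        exact add_right_cancel he
    have hdle : d ≤ T.card := hCcard ▸ Finset.card_le_card hCT
    have hsubcard : (T \ C).card = T.card - d := by
      rw [Finset.card_sdiff_of_subset hCT, hCcard]
    have hih := ih (T \ C) (by omega) hT'
    rw [hsubcard] at hih
    obtain ⟨e, he'⟩ := hih
    refine ⟨e + 1, ?_⟩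
    have hexp : d * (e + 1) = d * e + d := by ring
    omega

lemma orbit_dvd {G : Type*} [AddCommGroup G] [Fintype G] [DecidableEq G]
    (c : G) (T : Finset G) (hT : ∀ t ∈ T, t + c ∈ T) : addOrderOf c ∣ T.card :=
  orbit_dvd_aux c T.card T le_rfl hT

lemma sym_trans {T : Finset (ZMod n)} {c : ZMod n}
    (hT : ∀ u, u ∈ T ↔ -u ∈ T)
    (hS : ∀ s, s ∈ T.image (· + c) ↔ -s ∈ T.image (· + c)) :
    ∀ s ∈ T.image (· + c), s + (c + c) ∈ T.image (· + c) := by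
  intro s hs
  obtain ⟨u, hu, rfl⟩ := Finset.mem_image.mp hs
  obtain ⟨u', hu', he⟩ := Finset.mem_image.mp ((hS _).mp hs)
  -- he : u' + c = -(u + c)
  have hu'' : -u' ∈ T := (hT u').mp hu'
  rw [Finset.mem_image]
  refine ⟨-u', hu'', ?_⟩
  have : u' = -u - c - c := by linear_combination he
  rw [this]
  ring

lemma dvd_of_sym {T : Finset (ZMod n)} {c : ZMod n}
    (hT : ∀ u, u ∈ T ↔ -u ∈ T)
    (hS : ∀ s, s ∈ T.image (· + c) ↔ -s ∈ T.image (· + c)) :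
    addOrderOf (c + c) ∣ T.card := by
  have := orbit_dvd (c + c) (T.image (· + c)) (sym_trans hT hS)
  rwa [Finset.card_image_of_injective _ (add_left_injective c)] at this

lemma c_zero_of_dvd (hn : Odd n) {c : ZMod n} {a b : ℕ}
    (ha : addOrderOf (c + c) ∣ a) (hb : addOrderOf (c + c) ∣ b)
    (hgcd : Nat.gcd n (Nat.gcd a b) = 1) : c = 0 := by
  have hdn : addOrderOf (c + c) ∣ n := by
    have := addOrderOf_dvd_card (x := c + c)
    rwa [ZMod.card] at this
  have h1 : addOrderOf (c + c) ∣ 1 := by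
    rw [← hgcd]
    exact Nat.dvd_gcd hdn (Nat.dvd_gcd ha hb)
  have h2 : addOrderOf (c + c) = 1 := Nat.eq_one_of_dvd_one h1
  have h3 : c + c = 0 := AddMonoid.addOrderOf_eq_one_iff.mp h2
  have hu : IsUnit (2 : ZMod n) := by
    have := (ZMod.isUnit_iff_coprime 2 n).mpr (Nat.coprime_two_left.mpr hn)
    simpa using this
  have h4 : (2 : ZMod n) * c = (2 : ZMod n) * 0 := by
    rw [mul_zero]; linear_combination h3
  exact hu.mul_left_cancel h4


lemma Rsym {X : Finset (DihedralGroup n)} (hss : StronglySymmetric X) :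
    ∀ u, u ∈ Rset X ↔ -u ∈ Rset X := by
  intro u; simp only [Rset, Finset.mem_filter, Finset.mem_univ, true_and]
  exact (hss u).1

lemma Ssym {X : Finset (DihedralGroup n)} (hss : StronglySymmetric X) :
    ∀ u, u ∈ Sset X ↔ -u ∈ Sset X := by
  intro u; simp only [Sset, Finset.mem_filter, Finset.mem_univ, true_and]
  exact (hss u).2

lemma mul_sym {T : Finset (ZMod n)} (hT : ∀ u, u ∈ T ↔ -u ∈ T) (a : ZMod n) :
    ∀ u, u ∈ T.image (fun x => a * x) ↔ -u ∈ T.image (fun x => a * x) := by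
  have key : ∀ u, u ∈ T.image (fun x => a * x) → -u ∈ T.image (fun x => a * x) := by
    intro u hu
    obtain ⟨v, hv, rfl⟩ := Finset.mem_image.mp hu
    exact Finset.mem_image.mpr ⟨-v, (hT v).mp hv, by ring⟩
  intro u
  constructor
  · exact key u
  · intro hu; have := key _ hu; rwa [neg_neg] at this

lemma card_image_unit {T : Finset (ZMod n)} {a : ZMod n} (ha : IsUnit a) :
    (T.image (fun x => a * x)).card = T.card :=
  Finset.card_image_of_injective _ (fun x y hxy => ha.mul_left_cancel hxy)

section structural
variable (i j : ℕ) (c : ZMod n) (X : Finset (DihedralGroup n))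

lemma Rset_mul_r :
    Rset ((X.image (fij n i j)).image (· * DihedralGroup.r c))
      = ((Rset X).image (fun u => (i : ZMod n) * u)).image (· + c) := by
  ext v
  simp only [Rset, Finset.mem_filter, Finset.mem_univ, true_and, Finset.mem_image]
  constructor
  · rintro ⟨x, ⟨a, ha, rfl⟩, he⟩
    cases a with
    | r u =>
      simp only [fij, DihedralGroup.r_mul_r] at he
      exact ⟨_, ⟨u, ha, rfl⟩, by injection he⟩
    | sr u =>
      simp only [fij, DihedralGroup.sr_mul_r] at he
      exact absurd he (by simp)
  · rintro ⟨w, ⟨u, hu, rfl⟩, rfl⟩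
    exact ⟨fij n i j (DihedralGroup.r u), ⟨_, hu, rfl⟩,
      by simp only [fij, DihedralGroup.r_mul_r]⟩

lemma Sset_mul_r :
    Sset ((X.image (fij n i j)).image (· * DihedralGroup.r c))
      = ((Sset X).image (fun u => (i : ZMod n) * u)).image (· + ((j : ZMod n) + c)) := by
  ext v
  simp only [Sset, Finset.mem_filter, Finset.mem_univ, true_and, Finset.mem_image]
  constructor
  · rintro ⟨x, ⟨a, ha, rfl⟩, he⟩
    cases a with
    | r u =>
      simp only [fij, DihedralGroup.r_mul_r] at he
      exact absurd he (by simp)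
    | sr u =>
      simp only [fij, DihedralGroup.sr_mul_r] at he
      refine ⟨_, ⟨u, ha, rfl⟩, ?_⟩
      have hv : (j : ZMod n) + (i : ZMod n) * u + c = v := by injection he
      rw [← hv]; ring
  · rintro ⟨w, ⟨u, hu, rfl⟩, rfl⟩
    refine ⟨fij n i j (DihedralGroup.sr u), ⟨_, hu, rfl⟩, ?_⟩
    simp only [fij, DihedralGroup.sr_mul_r]
    congr 1; ring

lemma Rset_inv_r_mul :
    Rset ((X.image (fij n i j)).image ((DihedralGroup.r c)⁻¹ * ·))
      = ((Rset X).image (fun u => (i : ZMod n) * u)).image (· + (-c)) := by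
  have hinv : (DihedralGroup.r c)⁻¹ = DihedralGroup.r (-c) := by
    apply inv_eq_of_mul_eq_one_right
    rw [DihedralGroup.r_mul_r, add_neg_cancel, DihedralGroup.one_def]
  ext v
  simp only [Rset, Finset.mem_filter, Finset.mem_univ, true_and, Finset.mem_image, hinv]
  constructor
  · rintro ⟨x, ⟨a, ha, rfl⟩, he⟩
    cases a with
    | r u =>
      simp only [fij, DihedralGroup.r_mul_r] at he
      refine ⟨_, ⟨u, ha, rfl⟩, ?_⟩
      have hv : -c + (i : ZMod n) * u = v := by injection he
      rw [← hv]; ring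
    | sr u =>
      simp only [fij, DihedralGroup.r_mul_sr] at he
      exact absurd he (by simp)
  · rintro ⟨w, ⟨u, hu, rfl⟩, rfl⟩
    refine ⟨fij n i j (DihedralGroup.r u), ⟨_, hu, rfl⟩, ?_⟩
    simp only [fij, DihedralGroup.r_mul_r]
    congr 1; ring

lemma Sset_inv_r_mul :
    Sset ((X.image (fij n i j)).image ((DihedralGroup.r c)⁻¹ * ·))
      = ((Sset X).image (fun u => (i : ZMod n) * u)).image (· + ((j : ZMod n) + c)) := by
  have hinv : (DihedralGroup.r c)⁻¹ = DihedralGroup.r (-c) := by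
    apply inv_eq_of_mul_eq_one_right
    rw [DihedralGroup.r_mul_r, add_neg_cancel, DihedralGroup.one_def]
  ext v
  simp only [Sset, Finset.mem_filter, Finset.mem_univ, true_and, Finset.mem_image, hinv]
  constructor
  · rintro ⟨x, ⟨a, ha, rfl⟩, he⟩
    cases a with
    | r u =>
      simp only [fij, DihedralGroup.r_mul_r] at he
      exact absurd he (by simp)
    | sr u =>
      simp only [fij, DihedralGroup.r_mul_sr] at he
      refine ⟨_, ⟨u, ha, rfl⟩, ?_⟩
      have hv : (j : ZMod n) + (i : ZMod n) * u - (-c) = v := by injection he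
      rw [← hv]; ring
  · rintro ⟨w, ⟨u, hu, rfl⟩, rfl⟩
    refine ⟨fij n i j (DihedralGroup.sr u), ⟨_, hu, rfl⟩, ?_⟩
    simp only [fij, DihedralGroup.r_mul_sr]
    congr 1; ring

lemma Rset_mul_sr :
    Rset ((X.image (fij n i j)).image (· * DihedralGroup.sr c))
      = ((Sset X).image (fun u => -(i : ZMod n) * u)).image (· + (c - (j : ZMod n))) := by
  ext v
  simp only [Rset, Sset, Finset.mem_filter, Finset.mem_univ, true_and, Finset.mem_image]
  constructor
  · rintro ⟨x, ⟨a, ha, rfl⟩, he⟩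
    cases a with
    | r u =>
      simp only [fij, DihedralGroup.r_mul_sr] at he
      exact absurd he (by simp)
    | sr u =>
      simp only [fij, DihedralGroup.sr_mul_sr] at he
      refine ⟨_, ⟨u, ha, rfl⟩, ?_⟩
      have hv : c - ((j : ZMod n) + (i : ZMod n) * u) = v := by injection he
      rw [← hv]; ring
  · rintro ⟨w, ⟨u, hu, rfl⟩, rfl⟩
    refine ⟨fij n i j (DihedralGroup.sr u), ⟨_, hu, rfl⟩, ?_⟩
    simp only [fij, DihedralGroup.sr_mul_sr]
    congr 1; ring

lemma Sset_mul_sr :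
    Sset ((X.image (fij n i j)).image (· * DihedralGroup.sr c))
      = ((Rset X).image (fun u => -(i : ZMod n) * u)).image (· + c) := by
  ext v
  simp only [Rset, Sset, Finset.mem_filter, Finset.mem_univ, true_and, Finset.mem_image]
  constructor
  · rintro ⟨x, ⟨a, ha, rfl⟩, he⟩
    cases a with
    | r u =>
      simp only [fij, DihedralGroup.r_mul_sr] at he
      refine ⟨_, ⟨u, ha, rfl⟩, ?_⟩
      have hv : c - (i : ZMod n) * u = v := by injection he
      rw [← hv]; ring
    | sr u =>
      simp only [fij, DihedralGroup.sr_mul_sr] at he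
      exact absurd he (by simp)
  · rintro ⟨w, ⟨u, hu, rfl⟩, rfl⟩
    refine ⟨fij n i j (DihedralGroup.r u), ⟨_, hu, rfl⟩, ?_⟩
    simp only [fij, DihedralGroup.r_mul_sr]
    congr 1; ring

lemma sr_inv_eq (c : ZMod n) : (DihedralGroup.sr c)⁻¹ = DihedralGroup.sr c := by
  apply inv_eq_of_mul_eq_one_right
  rw [DihedralGroup.sr_mul_sr, sub_self, DihedralGroup.one_def]

lemma Rset_inv_sr_mul :
    Rset ((X.image (fij n i j)).image ((DihedralGroup.sr c)⁻¹ * ·))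
      = ((Sset X).image (fun u => (i : ZMod n) * u)).image (· + ((j : ZMod n) - c)) := by
  ext v
  simp only [Rset, Sset, Finset.mem_filter, Finset.mem_univ, true_and, Finset.mem_image,
    sr_inv_eq]
  constructor
  · rintro ⟨x, ⟨a, ha, rfl⟩, he⟩
    cases a with
    | r u =>
      simp only [fij, DihedralGroup.sr_mul_r] at he
      exact absurd he (by simp)
    | sr u =>
      simp only [fij, DihedralGroup.sr_mul_sr] at he
      refine ⟨_, ⟨u, ha, rfl⟩, ?_⟩
      have hv : (j : ZMod n) + (i : ZMod n) * u - c = v := by injection he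
      rw [← hv]; ring
  · rintro ⟨w, ⟨u, hu, rfl⟩, rfl⟩
    refine ⟨fij n i j (DihedralGroup.sr u), ⟨_, hu, rfl⟩, ?_⟩
    simp only [fij, DihedralGroup.sr_mul_sr]
    congr 1; ring

lemma Sset_inv_sr_mul :
    Sset ((X.image (fij n i j)).image ((DihedralGroup.sr c)⁻¹ * ·))
      = ((Rset X).image (fun u => (i : ZMod n) * u)).image (· + c) := by
  ext v
  simp only [Rset, Sset, Finset.mem_filter, Finset.mem_univ, true_and, Finset.mem_image,
    sr_inv_eq]
  constructor
  · rintro ⟨x, ⟨a, ha, rfl⟩, he⟩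
    cases a with
    | r u =>
      simp only [fij, DihedralGroup.sr_mul_r] at he
      refine ⟨_, ⟨u, ha, rfl⟩, ?_⟩
      have hv : c + (i : ZMod n) * u = v := by injection he
      rw [← hv]; ring
    | sr u =>
      simp only [fij, DihedralGroup.sr_mul_sr] at he
      exact absurd he (by simp)
  · rintro ⟨w, ⟨u, hu, rfl⟩, rfl⟩
    refine ⟨fij n i j (DihedralGroup.r u), ⟨_, hu, rfl⟩, ?_⟩
    simp only [fij, DihedralGroup.sr_mul_r]
    congr 1; ring

end structural


lemma forcing (hn : Odd n) {A' B' C' D' : Finset (DihedralGroup n)} (i j : ℕ)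
    (hi : Nat.gcd i n = 1) (h : DihedralGroup n)
    (hC' : C' = (A'.image (fij n i j)).image (· * h))
    (hD' : D' = (B'.image (fij n i j)).image (h⁻¹ * ·))
    (hssA : StronglySymmetric A') (hssB : StronglySymmetric B')
    (hssC : StronglySymmetric C') (hssD : StronglySymmetric D')
    (hcard : A'.card * B'.card = 2 * n - 1)
    (hAB : A' * B' = Finset.univ \ {1})
    (hgk : Nat.gcd n ((A'.card + 1) / 2) = 1)
    (hgl : Nat.gcd n ((B'.card + 1) / 2) = 1) :
    ((j : ℕ) : ZMod n) = 0 ∧ (h = DihedralGroup.r 0 ∨ h = DihedralGroup.sr 0) := by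
  have hu : IsUnit ((i : ℕ) : ZMod n) := (ZMod.isUnit_iff_coprime i n).mpr hi
  have hu' : IsUnit (-((i : ℕ) : ZMod n)) := hu.neg
  obtain ⟨hcnt1, hcnt2⟩ := counts hcard hAB
  have hks := card_split A'
  have hls := card_split B'
  have hstruct := kr_structure (n := n) (NeZero.ne n) hks.symm hls.symm hcnt1 hcnt2
  cases h with
  | r c =>
    have hd1 : addOrderOf (c + c) ∣ (Rset A').card := by
      have h1 : Rset C' = ((Rset A').image (fun u => ((i : ℕ) : ZMod n) * u)).image (· + c) := by
        rw [hC']; exact Rset_mul_r i j c A'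
      have hsym : ∀ s, s ∈ ((Rset A').image (fun u => ((i : ℕ) : ZMod n) * u)).image (· + c)
          ↔ -s ∈ ((Rset A').image (fun u => ((i : ℕ) : ZMod n) * u)).image (· + c) := by
        rw [← h1]; exact Rsym hssC
      have := dvd_of_sym (mul_sym (Rsym hssA) _) hsym
      rwa [card_image_unit hu] at this
    have hd2 : addOrderOf (c + c) ∣ (Rset B').card := by
      have h1 : Rset D' = ((Rset B').image (fun u => ((i : ℕ) : ZMod n) * u)).image (· + (-c)) := by
        rw [hD']; exact Rset_inv_r_mul i j c B'
      have hsym : ∀ s, s ∈ ((Rset B').image (fun u => ((i : ℕ) : ZMod n) * u)).image (· + (-c))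
          ↔ -s ∈ ((Rset B').image (fun u => ((i : ℕ) : ZMod n) * u)).image (· + (-c)) := by
        rw [← h1]; exact Rsym hssD
      have := dvd_of_sym (mul_sym (Rsym hssB) _) hsym
      rw [card_image_unit hu] at this
      rwa [show -c + -c = -(c + c) by ring, addOrderOf_neg] at this
    have hd3 : addOrderOf ((((j : ℕ) : ZMod n) + c) + (((j : ℕ) : ZMod n) + c)) ∣ (Sset A').card := by
      have h1 : Sset C' = ((Sset A').image (fun u => ((i : ℕ) : ZMod n) * u)).image
          (· + (((j : ℕ) : ZMod n) + c)) := by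
        rw [hC']; exact Sset_mul_r i j c A'
      have hsym : ∀ s, s ∈ ((Sset A').image (fun u => ((i : ℕ) : ZMod n) * u)).image
            (· + (((j : ℕ) : ZMod n) + c))
          ↔ -s ∈ ((Sset A').image (fun u => ((i : ℕ) : ZMod n) * u)).image
            (· + (((j : ℕ) : ZMod n) + c)) := by
        rw [← h1]; exact Ssym hssC
      have := dvd_of_sym (mul_sym (Ssym hssA) _) hsym
      rwa [card_image_unit hu] at this
    have hd4 : addOrderOf ((((j : ℕ) : ZMod n) + c) + (((j : ℕ) : ZMod n) + c)) ∣ (Sset B').card := by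
      have h1 : Sset D' = ((Sset B').image (fun u => ((i : ℕ) : ZMod n) * u)).image
          (· + (((j : ℕ) : ZMod n) + c)) := by
        rw [hD']; exact Sset_inv_r_mul i j c B'
      have hsym : ∀ s, s ∈ ((Sset B').image (fun u => ((i : ℕ) : ZMod n) * u)).image
            (· + (((j : ℕ) : ZMod n) + c))
          ↔ -s ∈ ((Sset B').image (fun u => ((i : ℕ) : ZMod n) * u)).image
            (· + (((j : ℕ) : ZMod n) + c)) := by
        rw [← h1]; exact Ssym hssD
      have := dvd_of_sym (mul_sym (Ssym hssB) _) hsym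
      rwa [card_image_unit hu] at this
    have hc0 : c = 0 ∧ (((j : ℕ) : ZMod n) + c) = 0 := by
      rcases hstruct with ⟨hkr, hls'⟩ | ⟨hks', hlr⟩
      · refine ⟨c_zero_of_dvd hn hd1 hd1 ?_, c_zero_of_dvd hn hd4 hd4 ?_⟩
        · rw [Nat.gcd_self, hkr]; exact hgk
        · rw [Nat.gcd_self, hls']; exact hgl
      · refine ⟨c_zero_of_dvd hn hd2 hd2 ?_, c_zero_of_dvd hn hd3 hd3 ?_⟩
        · rw [Nat.gcd_self, hlr]; exact hgl
        · rw [Nat.gcd_self, hks']; exact hgk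
    obtain ⟨hc, hjc⟩ := hc0
    subst hc
    rw [add_zero] at hjc
    exact ⟨hjc, Or.inl rfl⟩
  | sr c =>
    have hd1 : addOrderOf ((c - ((j : ℕ) : ZMod n)) + (c - ((j : ℕ) : ZMod n))) ∣ (Sset A').card := by
      have h1 : Rset C' = ((Sset A').image (fun u => -((i : ℕ) : ZMod n) * u)).image
          (· + (c - ((j : ℕ) : ZMod n))) := by
        rw [hC']; exact Rset_mul_sr i j c A'
      have hsym : ∀ s, s ∈ ((Sset A').image (fun u => -((i : ℕ) : ZMod n) * u)).image
            (· + (c - ((j : ℕ) : ZMod n)))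
          ↔ -s ∈ ((Sset A').image (fun u => -((i : ℕ) : ZMod n) * u)).image
            (· + (c - ((j : ℕ) : ZMod n))) := by
        rw [← h1]; exact Rsym hssC
      have := dvd_of_sym (mul_sym (Ssym hssA) _) hsym
      rwa [card_image_unit hu'] at this
    have hd2 : addOrderOf (c + c) ∣ (Rset A').card := by
      have h1 : Sset C' = ((Rset A').image (fun u => -((i : ℕ) : ZMod n) * u)).image (· + c) := by
        rw [hC']; exact Sset_mul_sr i j c A'
      have hsym : ∀ s, s ∈ ((Rset A').image (fun u => -((i : ℕ) : ZMod n) * u)).image (· + c)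
          ↔ -s ∈ ((Rset A').image (fun u => -((i : ℕ) : ZMod n) * u)).image (· + c) := by
        rw [← h1]; exact Ssym hssC
      have := dvd_of_sym (mul_sym (Rsym hssA) _) hsym
      rwa [card_image_unit hu'] at this
    have hd3 : addOrderOf ((c - ((j : ℕ) : ZMod n)) + (c - ((j : ℕ) : ZMod n))) ∣ (Sset B').card := by
      have h1 : Rset D' = ((Sset B').image (fun u => ((i : ℕ) : ZMod n) * u)).image
          (· + (((j : ℕ) : ZMod n) - c)) := by
        rw [hD']; exact Rset_inv_sr_mul i j c B'
      have hsym : ∀ s, s ∈ ((Sset B').image (fun u => ((i : ℕ) : ZMod n) * u)).image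
            (· + (((j : ℕ) : ZMod n) - c))
          ↔ -s ∈ ((Sset B').image (fun u => ((i : ℕ) : ZMod n) * u)).image
            (· + (((j : ℕ) : ZMod n) - c)) := by
        rw [← h1]; exact Rsym hssD
      have := dvd_of_sym (mul_sym (Ssym hssB) _) hsym
      rw [card_image_unit hu] at this
      rwa [show ((j : ℕ) : ZMod n) - c + (((j : ℕ) : ZMod n) - c)
          = -((c - ((j : ℕ) : ZMod n)) + (c - ((j : ℕ) : ZMod n))) by ring,
        addOrderOf_neg] at this
    have hd4 : addOrderOf (c + c) ∣ (Rset B').card := by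
      have h1 : Sset D' = ((Rset B').image (fun u => ((i : ℕ) : ZMod n) * u)).image (· + c) := by
        rw [hD']; exact Sset_inv_sr_mul i j c B'
      have hsym : ∀ s, s ∈ ((Rset B').image (fun u => ((i : ℕ) : ZMod n) * u)).image (· + c)
          ↔ -s ∈ ((Rset B').image (fun u => ((i : ℕ) : ZMod n) * u)).image (· + c) := by
        rw [← h1]; exact Ssym hssD
      have := dvd_of_sym (mul_sym (Rsym hssB) _) hsym
      rwa [card_image_unit hu] at this
    have hc0 : c = 0 ∧ (c - ((j : ℕ) : ZMod n)) = 0 := by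
      rcases hstruct with ⟨hkr, hls'⟩ | ⟨hks', hlr⟩
      · refine ⟨c_zero_of_dvd hn hd2 hd2 ?_, c_zero_of_dvd hn hd3 hd3 ?_⟩
        · rw [Nat.gcd_self, hkr]; exact hgk
        · rw [Nat.gcd_self, hls']; exact hgl
      · refine ⟨c_zero_of_dvd hn hd4 hd4 ?_, c_zero_of_dvd hn hd1 hd1 ?_⟩
        · rw [Nat.gcd_self, hlr]; exact hgl
        · rw [Nat.gcd_self, hks']; exact hgk
    obtain ⟨hc, hjc⟩ := hc0
    subst hc
    have : ((j : ℕ) : ZMod n) = 0 := by linear_combination -hjc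
    exact ⟨this, Or.inr rfl⟩


lemma par_nat_mul (R : ℕ) (hR2 : R % 2 = 1) (x : ZMod (2*n)) :
    (((R : ZMod (2*n)) * x).val) % 2 = x.val % 2 := by
  rw [par_mul, Nat.mul_mod, ZMod.val_natCast, Nat.mod_mod_of_dvd _ tdvd, hR2]
  omega

lemma cast_nat_mul (R : ℕ) (x : ZMod (2*n)) :
    ((((R : ZMod (2*n)) * x).val : ℕ) : ZMod n) = (R : ZMod n) * ((x.val : ℕ) : ZMod n) := by
  rw [cast_val_mul]
  congr 1
  rw [ZMod.val_natCast, cast_val_mod]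

lemma n_val : ((n : ZMod (2*n)).val) = n := by
  rw [ZMod.val_natCast]
  exact Nat.mod_eq_of_lt (by have := Nat.pos_of_ne_zero (NeZero.ne n); omega)

lemma par_add_n (hn : Odd n) (y : ZMod (2*n)) :
    ((y + (n : ZMod (2*n))).val) % 2 = (y.val + 1) % 2 := by
  rw [par_add, Nat.add_mod, n_val]
  rw [Nat.odd_iff] at hn
  omega

lemma cast_add_n (y : ZMod (2*n)) :
    (((y + (n : ZMod (2*n))).val : ℕ) : ZMod n) = ((y.val : ℕ) : ZMod n) := by
  rw [cast_val_add, n_val, ZMod.natCast_self, add_zero]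

lemma sub_n_eq_add_n (x : ZMod (2*n)) :
    x - (n : ZMod (2*n)) = x + (n : ZMod (2*n)) := by
  have h2 : ((2 * n : ℕ) : ZMod (2*n)) = 0 := ZMod.natCast_self _
  push_cast at h2
  linear_combination -h2

lemma key_r (i j R : ℕ) (hj0 : ((j : ℕ) : ZMod n) = 0) (hR2 : R % 2 = 1)
    (hRn : ((R : ℕ) : ZMod n) = ((i : ℕ) : ZMod n)) (x : ZMod (2*n)) :
    pecher n ((R : ZMod (2*n)) * x) = fij n i j (pecher n x) := by
  by_cases hx : x.val % 2 = 0
  · rw [pecher_even hx, pecher_even (by rw [par_nat_mul R hR2]; exact hx)]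
    simp only [fij]
    rw [cast_nat_mul, hRn]
  · have hx' : x.val % 2 = 1 := by omega
    rw [pecher_odd hx', pecher_odd (by rw [par_nat_mul R hR2]; exact hx')]
    simp only [fij]
    rw [cast_nat_mul, hRn, hj0, zero_add]

lemma key_sr_C (hn : Odd n) (i j R' : ℕ) (hj0 : ((j : ℕ) : ZMod n) = 0)
    (hR2 : R' % 2 = 1) (hRn : ((R' : ℕ) : ZMod n) = -((i : ℕ) : ZMod n)) (x : ZMod (2*n)) :
    pecher n ((R' : ZMod (2*n)) * x + (n : ZMod (2*n)))
      = fij n i j (pecher n x) * DihedralGroup.sr 0 := by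
  have hpar : (((R' : ZMod (2*n)) * x + (n : ZMod (2*n))).val) % 2
      = (x.val + 1) % 2 := by
    rw [par_add_n hn]
    have := par_nat_mul R' hR2 x
    omega
  have hcast : ((((R' : ZMod (2*n)) * x + (n : ZMod (2*n))).val : ℕ) : ZMod n)
      = -((i : ℕ) : ZMod n) * ((x.val : ℕ) : ZMod n) := by
    rw [cast_add_n, cast_nat_mul, hRn]
  by_cases hx : x.val % 2 = 0
  · rw [pecher_even hx, pecher_odd (by omega), hcast]
    simp only [fij, DihedralGroup.r_mul_sr]
    congr 1; ring
  · have hx' : x.val % 2 = 1 := by omega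
    rw [pecher_odd hx', pecher_even (by omega), hcast]
    simp only [fij, DihedralGroup.sr_mul_sr]
    rw [hj0]
    congr 1; ring

lemma key_sr_D (hn : Odd n) (i j R' : ℕ) (hj0 : ((j : ℕ) : ZMod n) = 0)
    (hR2 : R' % 2 = 1) (hRn : ((R' : ℕ) : ZMod n) = -((i : ℕ) : ZMod n)) (x : ZMod (2*n)) :
    pecher n ((R' : ZMod (2*n)) * x - (n : ZMod (2*n)))
      = DihedralGroup.sr 0 * fij n i j (pecher n (-x)) := by
  rw [sub_n_eq_add_n]
  have hpar : (((R' : ZMod (2*n)) * x + (n : ZMod (2*n))).val) % 2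
      = (x.val + 1) % 2 := by
    rw [par_add_n hn]
    have := par_nat_mul R' hR2 x
    omega
  have hcast : ((((R' : ZMod (2*n)) * x + (n : ZMod (2*n))).val : ℕ) : ZMod n)
      = -((i : ℕ) : ZMod n) * ((x.val : ℕ) : ZMod n) := by
    rw [cast_add_n, cast_nat_mul, hRn]
  rw [pecher_neg hn]
  by_cases hx : x.val % 2 = 0
  · rw [pecher_even hx, pecher_odd (by omega), hcast]
    simp only [dneg, fij, DihedralGroup.sr_mul_r]
    congr 1; ring
  · have hx' : x.val % 2 = 1 := by omega
    rw [pecher_odd hx', pecher_even (by omega), hcast]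
    simp only [dneg, fij, DihedralGroup.sr_mul_sr]
    rw [hj0]
    congr 1; ring

lemma image_r_C (hn : Odd n) {A' C' : Finset (DihedralGroup n)} (i j R : ℕ)
    (hj0 : ((j : ℕ) : ZMod n) = 0) (hR2 : R % 2 = 1)
    (hRn : ((R : ℕ) : ZMod n) = ((i : ℕ) : ZMod n))
    (hC' : C' = (A'.image (fij n i j)).image (· * DihedralGroup.r 0)) :
    ipecher n C' = (ipecher n A').image (fun x => (R : ZMod (2*n)) * x) := by
  ext z
  rw [mem_ipecher, hC', Finset.mem_image]
  simp only [Finset.mem_image]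
  constructor
  · rintro ⟨x, ⟨a, ha, rfl⟩, he⟩
    obtain ⟨y, rfl⟩ := (pecher_bij hn).2 a
    refine ⟨y, mem_ipecher.mpr ha, ?_⟩
    apply pecher_inj hn
    rw [key_r i j R hj0 hR2 hRn, ← he, ← DihedralGroup.one_def, mul_one]
  · rintro ⟨x, hx, rfl⟩
    exact ⟨fij n i j (pecher n x), ⟨pecher n x, mem_ipecher.mp hx, rfl⟩,
      by rw [← DihedralGroup.one_def, mul_one, key_r i j R hj0 hR2 hRn]⟩

lemma image_r_D (hn : Odd n) {B' D' : Finset (DihedralGroup n)} (i j R : ℕ)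
    (hj0 : ((j : ℕ) : ZMod n) = 0) (hR2 : R % 2 = 1)
    (hRn : ((R : ℕ) : ZMod n) = ((i : ℕ) : ZMod n))
    (hD' : D' = (B'.image (fij n i j)).image ((DihedralGroup.r 0)⁻¹ * ·)) :
    ipecher n D' = (ipecher n B').image (fun x => (R : ZMod (2*n)) * x) := by
  have hone : ∀ g : DihedralGroup n, (DihedralGroup.r 0)⁻¹ * g = g := by
    intro g; rw [← DihedralGroup.one_def, inv_one, one_mul]
  ext z
  rw [mem_ipecher, hD', Finset.mem_image]
  simp only [Finset.mem_image]
  constructor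
  · rintro ⟨x, ⟨a, ha, rfl⟩, he⟩
    obtain ⟨y, rfl⟩ := (pecher_bij hn).2 a
    refine ⟨y, mem_ipecher.mpr ha, ?_⟩
    apply pecher_inj hn
    rw [key_r i j R hj0 hR2 hRn, ← he, hone]
  · rintro ⟨x, hx, rfl⟩
    exact ⟨fij n i j (pecher n x), ⟨pecher n x, mem_ipecher.mp hx, rfl⟩,
      by rw [hone, key_r i j R hj0 hR2 hRn]⟩

lemma image_sr_C (hn : Odd n) {A' C' : Finset (DihedralGroup n)} (i j R' : ℕ)
    (hj0 : ((j : ℕ) : ZMod n) = 0) (hR2 : R' % 2 = 1)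
    (hRn : ((R' : ℕ) : ZMod n) = -((i : ℕ) : ZMod n))
    (hC' : C' = (A'.image (fij n i j)).image (· * DihedralGroup.sr 0)) :
    ipecher n C' = (ipecher n A').image
      (fun x => (R' : ZMod (2*n)) * x + (n : ZMod (2*n))) := by
  ext z
  rw [mem_ipecher, hC', Finset.mem_image]
  simp only [Finset.mem_image]
  constructor
  · rintro ⟨x, ⟨a, ha, rfl⟩, he⟩
    obtain ⟨y, rfl⟩ := (pecher_bij hn).2 a
    refine ⟨y, mem_ipecher.mpr ha, ?_⟩
    apply pecher_inj hn
    rw [key_sr_C hn i j R' hj0 hR2 hRn, ← he]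
  · rintro ⟨x, hx, rfl⟩
    exact ⟨fij n i j (pecher n x), ⟨pecher n x, mem_ipecher.mp hx, rfl⟩,
      (key_sr_C hn i j R' hj0 hR2 hRn x).symm⟩

lemma image_sr_D (hn : Odd n) {B' D' : Finset (DihedralGroup n)} (i j R' : ℕ)
    (hssB : StronglySymmetric B')
    (hj0 : ((j : ℕ) : ZMod n) = 0) (hR2 : R' % 2 = 1)
    (hRn : ((R' : ℕ) : ZMod n) = -((i : ℕ) : ZMod n))
    (hD' : D' = (B'.image (fij n i j)).image ((DihedralGroup.sr 0)⁻¹ * ·)) :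
    ipecher n D' = (ipecher n B').image
      (fun x => (R' : ZMod (2*n)) * x - (n : ZMod (2*n))) := by
  ext z
  rw [mem_ipecher, hD', Finset.mem_image]
  simp only [Finset.mem_image, sr_inv_eq]
  constructor
  · rintro ⟨x, ⟨a, ha, rfl⟩, he⟩
    obtain ⟨y, rfl⟩ := (pecher_bij hn).2 a
    refine ⟨-y, mem_ipecher_neg hn hssB (mem_ipecher.mpr ha), ?_⟩
    apply pecher_inj hn
    rw [key_sr_D hn i j R' hj0 hR2 hRn, neg_neg, ← he]
  · rintro ⟨x, hx, rfl⟩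
    refine ⟨fij n i j (pecher n (-x)),
      ⟨pecher n (-x), mem_ipecher.mp (mem_ipecher_neg hn hssB hx), rfl⟩,
      (key_sr_D hn i j R' hj0 hR2 hRn x).symm⟩

end NFaux

open NFaux in
/-- If `(A',B')` and `(C',D') = (f_{i,j}(A')h, h⁻¹f_{i,j}(B'))` are equivalent
strongly symmetric `(k,ℓ)`-near-factorizations of `D_n` with
`gcd(n,(k+1)/2) = gcd(n,(ℓ+1)/2) = 1`, then their images `(A,B)` and `(C,D)`
under the inverse Pêcher transform are equivalent symmetric
near-factorizations of `Z_{2n}`. -/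
theorem stmt16 (n : ℕ) [NeZero n] (k ℓ : ℕ)
    (A' B' : Finset (DihedralGroup n))
    (hA'card : A'.card = k) (hB'card : B'.card = ℓ)
    (hNF : A'.card * B'.card = 2 * n - 1 ∧ A' * B' = Finset.univ \ {1})
    (hssA : StronglySymmetric A') (hssB : StronglySymmetric B')
    (i j : ℕ) (hi : Nat.gcd i n = 1) (hj : j < n)
    (h : DihedralGroup n)
    (C' D' : Finset (DihedralGroup n))
    (hC' : C' = (A'.image (fij n i j)).image (· * h))
    (hD' : D' = (B'.image (fij n i j)).image (h⁻¹ * ·))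
    (hssC : StronglySymmetric C') (hssD : StronglySymmetric D')
    (hgk : Nat.gcd n ((k + 1) / 2) = 1) (hgl : Nat.gcd n ((ℓ + 1) / 2) = 1) :
    ((ipecher n A').card * (ipecher n B').card = 2 * n - 1 ∧
      ipecher n A' + ipecher n B' = Finset.univ \ {0}) ∧
    ipecher n A' = -(ipecher n A') ∧ ipecher n B' = -(ipecher n B') ∧
    ((ipecher n C').card * (ipecher n D').card = 2 * n - 1 ∧
      ipecher n C' + ipecher n D' = Finset.univ \ {0}) ∧
    ipecher n C' = -(ipecher n C') ∧ ipecher n D' = -(ipecher n D') ∧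
    ∃ (r h₀ : ℤ), Int.gcd r (2 * n) = 1 ∧
      ipecher n C' = (ipecher n A').image
        (fun x => (r : ZMod (2 * n)) * x + (h₀ : ZMod (2 * n))) ∧
      ipecher n D' = (ipecher n B').image
        (fun x => (r : ZMod (2 * n)) * x - (h₀ : ZMod (2 * n))) := by

  subst hA'card hB'card
  obtain ⟨hNF1, hNF2⟩ := hNF
  have hn : Odd n := n_odd (NeZero.ne n) hNF1 hgk hgl
  have hu : IsUnit ((i : ℕ) : ZMod n) := (ZMod.isUnit_iff_coprime i n).mpr hi
  -- C', D' basic facts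
  have hCcard : C'.card = A'.card := by rw [hC']; exact C_card i j hi h A'
  have hDcard : D'.card = B'.card := by rw [hD']; exact D_card i j hi h B'
  have hCD1 : C'.card * D'.card = 2 * n - 1 := by rw [hCcard, hDcard]; exact hNF1
  have hCD2 : C' * D' = Finset.univ \ {1} := by
    rw [hC', hD']; exact CD_prod i j hi h hNF2
  have hgkC : Nat.gcd n ((C'.card + 1) / 2) = 1 := by rw [hCcard]; exact hgk
  have hglD : Nat.gcd n ((D'.card + 1) / 2) = 1 := by rw [hDcard]; exact hgl
  obtain ⟨hj0, hcase⟩ := forcing hn i j hi h hC' hD' hssA hssB hssC hssD hNF1 hNF2 hgk hgl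
  refine ⟨⟨by rw [card_ipecher hn, card_ipecher hn]; exact hNF1,
    NF_transfer hn hssA hNF2⟩,
    ipecher_sym hn hssA, ipecher_sym hn hssB,
    ⟨by rw [card_ipecher hn, card_ipecher hn]; exact hCD1,
    NF_transfer hn hssC hCD2⟩,
    ipecher_sym hn hssC, ipecher_sym hn hssD, ?_⟩
  have hnpos : 0 < n := Nat.pos_of_ne_zero (NeZero.ne n)
  have hnodd : n % 2 = 1 := Nat.odd_iff.mp hn
  rcases hcase with heq | heq
  · -- h = r 0
    rw [heq] at hC' hD'
    set R : ℕ := if (i % n) % 2 = 1 then i % n else i % n + n with hRdef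
    have hR2 : R % 2 = 1 := by
      by_cases hc : (i % n) % 2 = 1 <;> simp only [hRdef, hc, if_true, if_false] <;> omega
    have hRn : ((R : ℕ) : ZMod n) = ((i : ℕ) : ZMod n) := by
      by_cases hc : (i % n) % 2 = 1 <;> simp only [hRdef, hc, if_true, if_false]
      · rw [ZMod.natCast_mod]
      · push_cast
        rw [ZMod.natCast_mod, ZMod.natCast_self, add_zero]
    have hRcop : Nat.Coprime R (2 * n) := by
      refine Nat.coprime_mul_iff_right.mpr ⟨?_, ?_⟩
      · exact Nat.coprime_two_right.mpr (Nat.odd_iff.mpr hR2)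
      · exact (ZMod.isUnit_iff_coprime R n).mp (by rw [hRn]; exact hu)
    refine ⟨(R : ℤ), 0, ?_, ?_, ?_⟩
    · have hcast : ((2 * n : ℕ) : ℤ) = 2 * (n : ℤ) := by push_cast; ring
      rw [show (2 : ℤ) * (n : ℤ) = ((2 * n : ℕ) : ℤ) from hcast.symm,
        Int.gcd_natCast_natCast]
      exact hRcop
    · have hfun : (fun x : ZMod (2*n) => ((((R : ℕ) : ℤ)) : ZMod (2*n)) * x
          + (((0 : ℤ)) : ZMod (2*n))) = (fun x : ZMod (2*n) => ((R : ℕ) : ZMod (2*n)) * x) := by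
        funext x; push_cast; ring
      rw [hfun]
      exact image_r_C hn i j R hj0 hR2 hRn hC'
    · have hfun : (fun x : ZMod (2*n) => ((((R : ℕ) : ℤ)) : ZMod (2*n)) * x
          - (((0 : ℤ)) : ZMod (2*n))) = (fun x : ZMod (2*n) => ((R : ℕ) : ZMod (2*n)) * x) := by
        funext x; push_cast; ring
      rw [hfun]
      exact image_r_D hn i j R hj0 hR2 hRn hD'
  · -- h = sr 0
    rw [heq] at hC' hD'
    set M : ℕ := n - i % n with hMdef
    set R' : ℕ := if M % 2 = 1 then M else M + n with hRdef
    have hiln : i % n < n := Nat.mod_lt i hnpos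
    have hR2 : R' % 2 = 1 := by
      by_cases hc : M % 2 = 1 <;> simp only [hRdef, hc, if_true, if_false] <;> omega
    have hMn : ((M : ℕ) : ZMod n) = -((i : ℕ) : ZMod n) := by
      rw [hMdef, Nat.cast_sub (le_of_lt hiln), ZMod.natCast_mod, ZMod.natCast_self,
        zero_sub]
    have hRn : ((R' : ℕ) : ZMod n) = -((i : ℕ) : ZMod n) := by
      by_cases hc : M % 2 = 1 <;> simp only [hRdef, hc, if_true, if_false]
      · exact hMn
      · push_cast
        rw [ZMod.natCast_self, add_zero]
        push_cast at hMn
        exact hMn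
    have hRcop : Nat.Coprime R' (2 * n) := by
      refine Nat.coprime_mul_iff_right.mpr ⟨?_, ?_⟩
      · exact Nat.coprime_two_right.mpr (Nat.odd_iff.mpr hR2)
      · exact (ZMod.isUnit_iff_coprime R' n).mp (by rw [hRn]; exact hu.neg)
    refine ⟨(R' : ℤ), (n : ℤ), ?_, ?_, ?_⟩
    · have hcast : ((2 * n : ℕ) : ℤ) = 2 * (n : ℤ) := by push_cast; ring
      rw [show (2 : ℤ) * (n : ℤ) = ((2 * n : ℕ) : ℤ) from hcast.symm,
        Int.gcd_natCast_natCast]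
      exact hRcop
    · have hfun : (fun x : ZMod (2*n) => ((((R' : ℕ) : ℤ)) : ZMod (2*n)) * x
          + ((((n : ℕ) : ℤ)) : ZMod (2*n)))
          = (fun x : ZMod (2*n) => ((R' : ℕ) : ZMod (2*n)) * x + ((n : ℕ) : ZMod (2*n))) := by
        funext x; push_cast; ring
      rw [hfun]
      exact image_sr_C hn i j R' hj0 hR2 hRn hC'
    · have hfun : (fun x : ZMod (2*n) => ((((R' : ℕ) : ℤ)) : ZMod (2*n)) * x
          - ((((n : ℕ) : ℤ)) : ZMod (2*n)))
          = (fun x : ZMod (2*n) => ((R' : ℕ) : ZMod (2*n)) * x - ((n : ℕ) : ZMod (2*n))) := by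
        funext x; push_cast; ring
      rw [hfun]
      exact image_sr_D hn i j R' hssB hj0 hR2 hRn hD'
end
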